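/- arXiv:1805.06512 — 3 statements merged into one kernel-verified Lean document; each statement's English description precedes it below -/
import Mathlib

section
/- If four points are chosen independently and uniformly on the perimeter of a square and the points are paired by a uniformly random perfect matching to form two chords (segments), the probability that the two resulting segments intersect in the interior of the square is 17/64. -/
open MeasureTheory Set

/-- Arclength parametrization of the perimeter of the unit square, `t ∈ [0,4)`. -/
noncomputable def sqBoundary (t : ℝ) : ℝ × ℝ :=
  if t ≤ 1 then (t, 0)
  else if t ≤ 2 then (1, t - 1)
  else if t ≤ 3 then (3 - t, 1)
  else (0, 4 - t)

/-- The two chords with endpoints `sqBoundary a, sqBoundary b` and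
`sqBoundary c, sqBoundary d` meet at a point interior to the square. -/
def ChordsCross (a b c d : ℝ) : Prop :=
  ∃ q ∈ Ioo (0:ℝ) 1 ×ˢ Ioo (0:ℝ) 1,
    q ∈ segment ℝ (sqBoundary a) (sqBoundary b) ∧
    q ∈ segment ℝ (sqBoundary c) (sqBoundary d)

namespace SqCross

def Rng (t : ℝ) : Prop :=
  (0 < t ∧ t < 1) ∨ (1 < t ∧ t < 2) ∨ (2 < t ∧ t < 3) ∨ (3 < t ∧ t < 4)

lemma sqB0 {t : ℝ} (h : t ≤ 1) : sqBoundary t = (t, 0) := if_pos h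

lemma sqB1 {t : ℝ} (h0 : 1 < t) (h1 : t ≤ 2) : sqBoundary t = (1, t - 1) := by
  unfold sqBoundary; rw [if_neg (by linarith), if_pos h1]

lemma sqB2 {t : ℝ} (h0 : 2 < t) (h1 : t ≤ 3) : sqBoundary t = (3 - t, 1) := by
  unfold sqBoundary; rw [if_neg (by linarith), if_neg (by linarith), if_pos h1]

lemma sqB3 {t : ℝ} (h0 : 3 < t) : sqBoundary t = (0, 4 - t) := by
  unfold sqBoundary; rw [if_neg (by linarith), if_neg (by linarith), if_neg (by linarith)]

noncomputable def orin (x y z : ℝ) : ℝ :=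
  ((sqBoundary y).1 - (sqBoundary x).1) * ((sqBoundary z).2 - (sqBoundary x).2) -
  ((sqBoundary y).2 - (sqBoundary x).2) * ((sqBoundary z).1 - (sqBoundary x).1)

set_option maxHeartbeats 2000000 in
lemma orin_pos {x y z : ℝ} (hx : Rng x) (hy : Rng y) (hz : Rng z)
    (hxy : x < y) (hyz : y < z)
    (hs : (x < 1 ∧ 1 < z) ∨ (x < 2 ∧ 2 < z) ∨ (x < 3 ∧ 3 < z)) :
    0 < orin x y z := by
  obtain ⟨hx1, hx2⟩ | ⟨hx1, hx2⟩ | ⟨hx1, hx2⟩ | ⟨hx1, hx2⟩ := hx <;>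
  obtain ⟨hy1, hy2⟩ | ⟨hy1, hy2⟩ | ⟨hy1, hy2⟩ | ⟨hy1, hy2⟩ := hy <;>
  obtain ⟨hz1, hz2⟩ | ⟨hz1, hz2⟩ | ⟨hz1, hz2⟩ | ⟨hz1, hz2⟩ := hz <;>
  (try linarith) <;>
  unfold orin <;>
  (first | rw [sqB0 (le_of_lt hx2)] | rw [sqB1 hx1 (le_of_lt hx2)]
         | rw [sqB2 hx1 (le_of_lt hx2)] | rw [sqB3 hx1]) <;>
  (first | rw [sqB0 (le_of_lt hy2)] | rw [sqB1 hy1 (le_of_lt hy2)]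
         | rw [sqB2 hy1 (le_of_lt hy2)] | rw [sqB3 hy1]) <;>
  (first | rw [sqB0 (le_of_lt hz2)] | rw [sqB1 hz1 (le_of_lt hz2)]
         | rw [sqB2 hz1 (le_of_lt hz2)] | rw [sqB3 hz1]) <;>
  dsimp only <;>
  (first | nlinarith | (obtain ⟨hs1, hs2⟩ | ⟨hs1, hs2⟩ | ⟨hs1, hs2⟩ := hs <;> linarith))

def Tri3 (x y z : ℝ) : Prop :=
  ∃ k : ℕ, k ≤ 3 ∧ (k:ℝ) ≤ x ∧ x ≤ k+1 ∧ (k:ℝ) ≤ y ∧ y ≤ k+1 ∧ (k:ℝ) ≤ z ∧ z ≤ k+1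

lemma tri3_swap₁ {x y z : ℝ} (h : Tri3 x y z) : Tri3 y x z := by
  obtain ⟨k, h⟩ := h; exact ⟨k, by tauto⟩

lemma tri3_swap₂ {x y z : ℝ} (h : Tri3 x y z) : Tri3 x z y := by
  obtain ⟨k, h⟩ := h; exact ⟨k, by tauto⟩

lemma notri_sep {x y z : ℝ} (hx : Rng x) (hz : Rng z) (hxy : x < y) (hyz : y < z)
    (h : ¬ Tri3 x y z) : (x < 1 ∧ 1 < z) ∨ (x < 2 ∧ 2 < z) ∨ (x < 3 ∧ 3 < z) := by
  obtain ⟨hx1, hx2⟩ | ⟨hx1, hx2⟩ | ⟨hx1, hx2⟩ | ⟨hx1, hx2⟩ := hx <;>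
  obtain ⟨hz1, hz2⟩ | ⟨hz1, hz2⟩ | ⟨hz1, hz2⟩ | ⟨hz1, hz2⟩ := hz <;>
  first
    | linarith
    | exact Or.inl ⟨by linarith, by linarith⟩
    | exact Or.inr (Or.inl ⟨by linarith, by linarith⟩)
    | exact Or.inr (Or.inr ⟨by linarith, by linarith⟩)
    | (exfalso; apply h; refine ⟨0, by norm_num, ?_, ?_, ?_, ?_, ?_, ?_⟩ <;> push_cast <;> linarith)
    | (exfalso; apply h; refine ⟨1, by norm_num, ?_, ?_, ?_, ?_, ?_, ?_⟩ <;> push_cast <;> linarith)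
    | (exfalso; apply h; refine ⟨2, by norm_num, ?_, ?_, ?_, ?_, ?_, ?_⟩ <;> push_cast <;> linarith)
    | (exfalso; apply h; refine ⟨3, by norm_num, ?_, ?_, ?_, ?_, ?_, ?_⟩ <;> push_cast <;> linarith)

lemma orin_rot {a b x : ℝ} : orin a b x = orin x a b := by unfold orin; ring

lemma orin_swap {a b x : ℝ} : orin a b x = - orin a x b := by unfold orin; ring

lemma orin_neg_in {a b x : ℝ} (ha : Rng a) (hx : Rng x) (hb : Rng b)
    (h1 : a < x) (h2 : x < b) (h : ¬ Tri3 a x b) : orin a b x < 0 := by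
  have := orin_pos ha hx hb h1 h2 (notri_sep ha hb h1 h2 h)
  rw [orin_swap]; linarith

lemma orin_pos_left {a b x : ℝ} (hx : Rng x) (ha : Rng a) (hb : Rng b)
    (h1 : x < a) (h2 : a < b) (h : ¬ Tri3 x a b) : 0 < orin a b x := by
  have := orin_pos hx ha hb h1 h2 (notri_sep hx hb h1 h2 h)
  rw [orin_rot]; linarith

lemma orin_pos_right {a b x : ℝ} (ha : Rng a) (hb : Rng b) (hx : Rng x)
    (h1 : a < b) (h2 : b < x) (h : ¬ Tri3 a b x) : 0 < orin a b x :=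
  orin_pos ha hb hx h1 h2 (notri_sep ha hx h1 h2 h)

/-- affine functional vanishing on the chord from `sqBoundary a` to `sqBoundary b` -/
noncomputable def lf (a b : ℝ) (x : ℝ × ℝ) : ℝ :=
  ((sqBoundary b).1 - (sqBoundary a).1) * (x.2 - (sqBoundary a).2) -
  ((sqBoundary b).2 - (sqBoundary a).2) * (x.1 - (sqBoundary a).1)

lemma lf_orin {a b x : ℝ} : lf a b (sqBoundary x) = orin a b x := rfl

lemma lf_affine (a b : ℝ) (p q : ℝ × ℝ) (u v : ℝ) (huv : u + v = 1) :
    lf a b (u • p + v • q) = u * lf a b p + v * lf a b q := by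
  have hv : v = 1 - u := by linarith
  subst hv
  simp only [lf, Prod.fst_add, Prod.snd_add, Prod.smul_fst, Prod.smul_snd, smul_eq_mul]
  ring

lemma orin_self₁ {a b : ℝ} : orin a b a = 0 := by unfold orin; ring
lemma orin_self₂ {a b : ℝ} : orin a b b = 0 := by unfold orin; ring

lemma Rng_mem {t : ℝ} (h : Rng t) :
    0 ≤ (sqBoundary t).1 ∧ (sqBoundary t).1 ≤ 1 ∧ 0 ≤ (sqBoundary t).2 ∧ (sqBoundary t).2 ≤ 1 := by
  obtain ⟨h1, h2⟩ | ⟨h1, h2⟩ | ⟨h1, h2⟩ | ⟨h1, h2⟩ := h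
  · rw [sqB0 h2.le]; refine ⟨by simp <;> linarith, by simp <;> linarith, by simp, by simp⟩
  · rw [sqB1 h1 h2.le]; refine ⟨by simp, by simp, by simp <;> linarith, by simp <;> linarith⟩
  · rw [sqB2 h1 h2.le]; refine ⟨by simp <;> linarith, by simp <;> linarith, by simp, by simp⟩
  · rw [sqB3 h1]; refine ⟨by simp, by simp, by simp <;> linarith, by simp <;> linarith⟩

lemma side_of_x0 {t : ℝ} (h : Rng t) (hx : (sqBoundary t).1 = 0) : 3 < t ∧ t < 4 := by
  obtain ⟨h1, h2⟩ | ⟨h1, h2⟩ | ⟨h1, h2⟩ | ⟨h1, h2⟩ := h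
  · rw [sqB0 h2.le] at hx; exact absurd hx (by simpa using h1.ne')
  · rw [sqB1 h1 h2.le] at hx; norm_num at hx
  · rw [sqB2 h1 h2.le] at hx; exact absurd hx (by simp; linarith)
  · exact ⟨h1, h2⟩

lemma side_of_x1 {t : ℝ} (h : Rng t) (hx : (sqBoundary t).1 = 1) : 1 < t ∧ t < 2 := by
  obtain ⟨h1, h2⟩ | ⟨h1, h2⟩ | ⟨h1, h2⟩ | ⟨h1, h2⟩ := h
  · rw [sqB0 h2.le] at hx; exact absurd hx (by simp; linarith)
  · exact ⟨h1, h2⟩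
  · rw [sqB2 h1 h2.le] at hx; exact absurd hx (by simp; linarith)
  · rw [sqB3 h1] at hx; norm_num at hx

lemma side_of_y0 {t : ℝ} (h : Rng t) (hx : (sqBoundary t).2 = 0) : 0 < t ∧ t < 1 := by
  obtain ⟨h1, h2⟩ | ⟨h1, h2⟩ | ⟨h1, h2⟩ | ⟨h1, h2⟩ := h
  · exact ⟨h1, h2⟩
  · rw [sqB1 h1 h2.le] at hx; exact absurd hx (by simp; linarith)
  · rw [sqB2 h1 h2.le] at hx; norm_num at hx
  · rw [sqB3 h1] at hx; exact absurd hx (by simp; linarith)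

lemma side_of_y1 {t : ℝ} (h : Rng t) (hx : (sqBoundary t).2 = 1) : 2 < t ∧ t < 3 := by
  obtain ⟨h1, h2⟩ | ⟨h1, h2⟩ | ⟨h1, h2⟩ | ⟨h1, h2⟩ := h
  · rw [sqB0 h2.le] at hx; norm_num at hx
  · rw [sqB1 h1 h2.le] at hx; exact absurd hx (by simp; linarith)
  · exact ⟨h1, h2⟩
  · rw [sqB3 h1] at hx; exact absurd hx (by simp; linarith)

lemma ycoord_eq_zero {t : ℝ} (h2 : t ≤ 1) : (sqBoundary t).2 = 0 := by rw [sqB0 h2]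

lemma xcoord_eq_one {t : ℝ} (h1 : 1 ≤ t) (h2 : t ≤ 2) : (sqBoundary t).1 = 1 := by
  rcases le_or_gt t 1 with h | h
  · rw [sqB0 h]; simpa using le_antisymm h h1
  · rw [sqB1 h h2]

lemma ycoord_eq_one {t : ℝ} (h1 : 2 ≤ t) (h2 : t ≤ 3) : (sqBoundary t).2 = 1 := by
  rcases le_or_gt t 2 with h | h
  · rw [sqB1 (by linarith) h]; simp; linarith [le_antisymm h h1]
  · rw [sqB2 h h2]

lemma xcoord_eq_zero {t : ℝ} (h1 : 3 ≤ t) (h2 : t < 4) : (sqBoundary t).1 = 0 := by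
  rcases le_or_gt t 3 with h | h
  · rw [sqB2 (by linarith) h]; simp; linarith [le_antisymm h h1]
  · rw [sqB3 h]


lemma aux_sq {x : ℝ} : ¬ (x * x < 0) := by nlinarith [sq_nonneg x]

lemma pos_of_mul_neg_left {x y : ℝ} (h : x * y < 0) (hx : x < 0) : 0 < y := by nlinarith

lemma neg_of_mul_neg_right {x y : ℝ} (h : x * y < 0) (hx : 0 < x) : y < 0 := by nlinarith

lemma comb_nonneg {u v p q : ℝ} (hu : 0 < u) (hv : 0 < v) (hp : 0 ≤ p) (hq : 0 ≤ q) :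
    0 ≤ u * p + v * q := by positivity

lemma comb_le_one {u v p q : ℝ} (huv : u + v = 1) (hu : 0 < u) (hv : 0 < v)
    (hp : p ≤ 1) (hq : q ≤ 1) : u * p + v * q ≤ 1 := by nlinarith

lemma comb_eq_zero_left {u v p q : ℝ} (hu : 0 < u) (hv : 0 < v) (hp : 0 ≤ p) (hq : 0 ≤ q)
    (h : u * p + v * q = 0) : p = 0 := by nlinarith

lemma comb_eq_zero_right {u v p q : ℝ} (hu : 0 < u) (hv : 0 < v) (hp : 0 ≤ p) (hq : 0 ≤ q)
    (h : u * p + v * q = 0) : q = 0 := by nlinarith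

lemma comb_eq_one_left {u v p q : ℝ} (huv : u + v = 1) (hu : 0 < u) (hv : 0 < v)
    (hp : p ≤ 1) (hq : q ≤ 1) (h : u * p + v * q = 1) : p = 1 := by nlinarith

lemma comb_eq_one_right {u v p q : ℝ} (huv : u + v = 1) (hu : 0 < u) (hv : 0 < v)
    (hp : p ≤ 1) (hq : q ≤ 1) (h : u * p + v * q = 1) : q = 1 := by nlinarith

set_option maxHeartbeats 1000000 in
lemma core {a b c d : ℝ} (ha : Rng a) (hb : Rng b) (hc : Rng c) (hd : Rng d)
    (hnabc : ¬ Tri3 a b c)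
    (hf : orin a b c * orin a b d < 0) (hg : orin c d a * orin c d b < 0) :
    ChordsCross a b c d := by
  have hne : orin a b d - orin a b c ≠ 0 := by
    intro h; rw [sub_eq_zero] at h; rw [h] at hf; exact aux_sq hf
  have hne' : orin c d b - orin c d a ≠ 0 := by
    intro h; rw [sub_eq_zero] at h; rw [h] at hg; exact aux_sq hg
  obtain ⟨u, hu_def⟩ : ∃ u : ℝ, u = orin a b d / (orin a b d - orin a b c) := ⟨_, rfl⟩
  obtain ⟨v, hv_def⟩ : ∃ v : ℝ, v = -orin a b c / (orin a b d - orin a b c) := ⟨_, rfl⟩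
  have huv : u + v = 1 := by rw [hu_def, hv_def]; field_simp; ring
  have hu : 0 < u := by
    rw [hu_def]
    rcases lt_trichotomy (orin a b c) 0 with h | h | h
    · have h2 : 0 < orin a b d := pos_of_mul_neg_left hf h
      exact div_pos h2 (by linarith)
    · rw [h] at hf; norm_num at hf
    · have h2 : orin a b d < 0 := neg_of_mul_neg_right hf h
      exact div_pos_of_neg_of_neg h2 (by linarith)
  have hv : 0 < v := by
    rw [hv_def]
    rcases lt_trichotomy (orin a b c) 0 with h | h | h
    · have h2 : 0 < orin a b d := pos_of_mul_neg_left hf h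
      exact div_pos (by linarith) (by linarith)
    · rw [h] at hf; norm_num at hf
    · have h2 : orin a b d < 0 := neg_of_mul_neg_right hf h
      exact div_pos_of_neg_of_neg (by linarith) (by linarith)
  obtain ⟨u', hu'_def⟩ : ∃ x : ℝ, x = orin c d b / (orin c d b - orin c d a) := ⟨_, rfl⟩
  obtain ⟨v', hv'_def⟩ : ∃ x : ℝ, x = -orin c d a / (orin c d b - orin c d a) := ⟨_, rfl⟩
  have huv' : u' + v' = 1 := by rw [hu'_def, hv'_def]; field_simp; ring
  have hu' : 0 < u' := by
    rw [hu'_def]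
    rcases lt_trichotomy (orin c d a) 0 with h | h | h
    · have h2 : 0 < orin c d b := pos_of_mul_neg_left hg h
      exact div_pos h2 (by linarith)
    · rw [h] at hg; norm_num at hg
    · have h2 : orin c d b < 0 := neg_of_mul_neg_right hg h
      exact div_pos_of_neg_of_neg h2 (by linarith)
  have hv' : 0 < v' := by
    rw [hv'_def]
    rcases lt_trichotomy (orin c d a) 0 with h | h | h
    · have h2 : 0 < orin c d b := pos_of_mul_neg_left hg h
      exact div_pos (by linarith) (by linarith)
    · rw [h] at hg; norm_num at hg
    · have h2 : orin c d b < 0 := neg_of_mul_neg_right hg h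
      exact div_pos_of_neg_of_neg (by linarith) (by linarith)
  obtain ⟨z, hz⟩ : ∃ z : ℝ × ℝ, z = u • sqBoundary c + v • sqBoundary d := ⟨_, rfl⟩
  obtain ⟨z', hz'⟩ : ∃ x : ℝ × ℝ, x = u' • sqBoundary a + v' • sqBoundary b := ⟨_, rfl⟩
  have hfz : lf a b z = 0 := by
    rw [hz, lf_affine a b _ _ u v huv, lf_orin, lf_orin, hu_def, hv_def]
    field_simp
    ring
  have hgz : lf c d z = 0 := by
    rw [hz, lf_affine c d _ _ u v huv, lf_orin, lf_orin, orin_self₁, orin_self₂]; ring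
  have hfz' : lf a b z' = 0 := by
    rw [hz', lf_affine a b _ _ u' v' huv', lf_orin, lf_orin, orin_self₁, orin_self₂]; ring
  have hgz' : lf c d z' = 0 := by
    rw [hz', lf_affine c d _ _ u' v' huv', lf_orin, lf_orin, hu'_def, hv'_def]
    field_simp
    ring
  have h1 : ((sqBoundary b).1 - (sqBoundary a).1) * (z.2 - z'.2) -
      ((sqBoundary b).2 - (sqBoundary a).2) * (z.1 - z'.1) = 0 := by
    have e1 := hfz; have e2 := hfz'; unfold lf at e1 e2; linear_combination e1 - e2
  have h2 : ((sqBoundary d).1 - (sqBoundary c).1) * (z.2 - z'.2) -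
      ((sqBoundary d).2 - (sqBoundary c).2) * (z.1 - z'.1) = 0 := by
    have e1 := hgz; have e2 := hgz'; unfold lf at e1 e2; linear_combination e1 - e2
  have hDne : ((sqBoundary b).1 - (sqBoundary a).1) * ((sqBoundary d).2 - (sqBoundary c).2) -
      ((sqBoundary b).2 - (sqBoundary a).2) * ((sqBoundary d).1 - (sqBoundary c).1) =
      orin a b d - orin a b c := by
    unfold orin; ring
  have hD0 : ((sqBoundary b).1 - (sqBoundary a).1) * ((sqBoundary d).2 - (sqBoundary c).2) -
      ((sqBoundary b).2 - (sqBoundary a).2) * ((sqBoundary d).1 - (sqBoundary c).1) ≠ 0 := by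
    rw [hDne]; exact hne
  have hz1 : z.1 = z'.1 := by
    have h3 : (z.1 - z'.1) * (((sqBoundary b).1 - (sqBoundary a).1) *
        ((sqBoundary d).2 - (sqBoundary c).2) -
        ((sqBoundary b).2 - (sqBoundary a).2) * ((sqBoundary d).1 - (sqBoundary c).1)) = 0 := by
      linear_combination ((sqBoundary d).1 - (sqBoundary c).1) * h1 -
        ((sqBoundary b).1 - (sqBoundary a).1) * h2
    rcases mul_eq_zero.1 h3 with h | h
    · linarith
    · exact absurd h hD0
  have hz2 : z.2 = z'.2 := by
    have h3 : (z.2 - z'.2) * (((sqBoundary b).1 - (sqBoundary a).1) *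
        ((sqBoundary d).2 - (sqBoundary c).2) -
        ((sqBoundary b).2 - (sqBoundary a).2) * ((sqBoundary d).1 - (sqBoundary c).1)) = 0 := by
      linear_combination ((sqBoundary d).2 - (sqBoundary c).2) * h1 -
        ((sqBoundary b).2 - (sqBoundary a).2) * h2
    rcases mul_eq_zero.1 h3 with h | h
    · linarith
    · exact absurd h hD0
  have hzz' : z = z' := Prod.ext hz1 hz2
  obtain ⟨hA1, hA2, hA3, hA4⟩ := Rng_mem ha
  obtain ⟨hB1, hB2, hB3, hB4⟩ := Rng_mem hb
  obtain ⟨hC1, hC2, hC3, hC4⟩ := Rng_mem hc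
  obtain ⟨hD1, hD2, hD3, hD4⟩ := Rng_mem hd
  have hzx : z.1 = u * (sqBoundary c).1 + v * (sqBoundary d).1 := by
    rw [hz]; simp [Prod.fst_add, Prod.smul_fst]
  have hzy : z.2 = u * (sqBoundary c).2 + v * (sqBoundary d).2 := by
    rw [hz]; simp [Prod.snd_add, Prod.smul_snd]
  have hz'x : z.1 = u' * (sqBoundary a).1 + v' * (sqBoundary b).1 := by
    rw [hzz', hz']; simp [Prod.fst_add, Prod.smul_fst]
  have hz'y : z.2 = u' * (sqBoundary a).2 + v' * (sqBoundary b).2 := by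
    rw [hzz', hz']; simp [Prod.snd_add, Prod.smul_snd]
  have hx0 : 0 < z.1 := by
    rcases lt_or_eq_of_le (show 0 ≤ z.1 by rw [hzx]; exact comb_nonneg hu hv hC1 hD1) with h | h
    · exact h
    · exfalso
      have hc0 := comb_eq_zero_left hu hv hC1 hD1 (hzx.symm.trans h.symm)
      have hd0 := comb_eq_zero_right hu hv hC1 hD1 (hzx.symm.trans h.symm)
      have ha0 := comb_eq_zero_left hu' hv' hA1 hB1 (hz'x.symm.trans h.symm)
      have hb0 := comb_eq_zero_right hu' hv' hA1 hB1 (hz'x.symm.trans h.symm)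
      obtain ⟨ha5, ha6⟩ := side_of_x0 ha ha0
      obtain ⟨hb5, hb6⟩ := side_of_x0 hb hb0
      obtain ⟨hc5, hc6⟩ := side_of_x0 hc hc0
      apply hnabc
      refine ⟨3, by norm_num, ?_, ?_, ?_, ?_, ?_, ?_⟩ <;> push_cast <;> linarith
  have hx1 : z.1 < 1 := by
    rcases lt_or_eq_of_le (show z.1 ≤ 1 by rw [hzx]; exact comb_le_one huv hu hv hC2 hD2) with h | h
    · exact h
    · exfalso
      have hc0 := comb_eq_one_left huv hu hv hC2 hD2 (hzx.symm.trans h)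
      have hd0 := comb_eq_one_right huv hu hv hC2 hD2 (hzx.symm.trans h)
      have ha0 := comb_eq_one_left huv' hu' hv' hA2 hB2 (hz'x.symm.trans h)
      have hb0 := comb_eq_one_right huv' hu' hv' hA2 hB2 (hz'x.symm.trans h)
      obtain ⟨ha5, ha6⟩ := side_of_x1 ha ha0
      obtain ⟨hb5, hb6⟩ := side_of_x1 hb hb0
      obtain ⟨hc5, hc6⟩ := side_of_x1 hc hc0
      apply hnabc
      refine ⟨1, by norm_num, ?_, ?_, ?_, ?_, ?_, ?_⟩ <;> push_cast <;> linarith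
  have hy0 : 0 < z.2 := by
    rcases lt_or_eq_of_le (show 0 ≤ z.2 by rw [hzy]; exact comb_nonneg hu hv hC3 hD3) with h | h
    · exact h
    · exfalso
      have hc0 := comb_eq_zero_left hu hv hC3 hD3 (hzy.symm.trans h.symm)
      have hd0 := comb_eq_zero_right hu hv hC3 hD3 (hzy.symm.trans h.symm)
      have ha0 := comb_eq_zero_left hu' hv' hA3 hB3 (hz'y.symm.trans h.symm)
      have hb0 := comb_eq_zero_right hu' hv' hA3 hB3 (hz'y.symm.trans h.symm)
      obtain ⟨ha5, ha6⟩ := side_of_y0 ha ha0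
      obtain ⟨hb5, hb6⟩ := side_of_y0 hb hb0
      obtain ⟨hc5, hc6⟩ := side_of_y0 hc hc0
      apply hnabc
      refine ⟨0, by norm_num, ?_, ?_, ?_, ?_, ?_, ?_⟩ <;> push_cast <;> linarith
  have hy1 : z.2 < 1 := by
    rcases lt_or_eq_of_le (show z.2 ≤ 1 by rw [hzy]; exact comb_le_one huv hu hv hC4 hD4) with h | h
    · exact h
    · exfalso
      have hc0 := comb_eq_one_left huv hu hv hC4 hD4 (hzy.symm.trans h)
      have hd0 := comb_eq_one_right huv hu hv hC4 hD4 (hzy.symm.trans h)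
      have ha0 := comb_eq_one_left huv' hu' hv' hA4 hB4 (hz'y.symm.trans h)
      have hb0 := comb_eq_one_right huv' hu' hv' hA4 hB4 (hz'y.symm.trans h)
      obtain ⟨ha5, ha6⟩ := side_of_y1 ha ha0
      obtain ⟨hb5, hb6⟩ := side_of_y1 hb hb0
      obtain ⟨hc5, hc6⟩ := side_of_y1 hc hc0
      apply hnabc
      refine ⟨2, by norm_num, ?_, ?_, ?_, ?_, ?_, ?_⟩ <;> push_cast <;> linarith
  exact ⟨z, ⟨⟨hx0, hx1⟩, ⟨hy0, hy1⟩⟩, ⟨u', v', hu'.le, hv'.le, huv', (hzz'.trans hz').symm⟩,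
    ⟨u, v, hu.le, hv.le, huv, hz.symm⟩⟩

lemma comb_neg {u v p q : ℝ} (huv : u + v = 1) (hu : 0 ≤ u) (hv : 0 ≤ v)
    (hp : p < 0) (hq : q < 0) : u * p + v * q < 0 := by
  rcases eq_or_lt_of_le hu with h | h
  · have hv1 : v = 1 := by linarith
    rw [← h, hv1]; simpa using hq
  · nlinarith [mul_neg_of_pos_of_neg h hp, mul_nonneg hv (neg_nonneg.2 hq.le)]

lemma comb_pos {u v p q : ℝ} (huv : u + v = 1) (hu : 0 ≤ u) (hv : 0 ≤ v)
    (hp : 0 < p) (hq : 0 < q) : 0 < u * p + v * q := by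
  rcases eq_or_lt_of_le hu with h | h
  · have hv1 : v = 1 := by linarith
    rw [← h, hv1]; simpa using hq
  · nlinarith [mul_pos h hp, mul_nonneg hv hq.le]

lemma tri3_rot {x y z : ℝ} (h : Tri3 x y z) : Tri3 y z x := tri3_swap₂ (tri3_swap₁ h)

lemma cross_swapAB {a b c d : ℝ} (h : ChordsCross b a c d) : ChordsCross a b c d := by
  obtain ⟨q, h1, h2, h3⟩ := h; exact ⟨q, h1, by rwa [segment_symm], h3⟩

lemma cross_comm {a b c d : ℝ} (h : ChordsCross a b c d) : ChordsCross c d a b := by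
  obtain ⟨q, h1, h2, h3⟩ := h; exact ⟨q, h1, h3, h2⟩

lemma cross_of_sep' {a b c d : ℝ} (ha : Rng a) (hb : Rng b) (hc : Rng c) (hd : Rng d)
    (h1 : ¬ Tri3 a b c) (h2 : ¬ Tri3 a b d) (h3 : ¬ Tri3 a c d) (h4 : ¬ Tri3 b c d)
    (hab : a < b) (hsep : ((c - a) * (c - b)) * ((d - a) * (d - b)) < 0) :
    ChordsCross a b c d := by
  have hcc : (c - a) * (c - b) ≠ 0 := by intro h; rw [h] at hsep; norm_num at hsep
  have hdd : (d - a) * (d - b) ≠ 0 := by intro h; rw [h] at hsep; norm_num at hsep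
  rcases lt_or_gt_of_ne hcc with hcneg | hcpos
  · have hdpos : 0 < (d - a) * (d - b) := pos_of_mul_neg_left hsep hcneg
    have hac : a < c := by nlinarith
    have hcb : c < b := by nlinarith
    have fc : orin a b c < 0 := orin_neg_in ha hc hb hac hcb (fun h => h1 (tri3_swap₂ h))
    rcases lt_trichotomy d a with hda | hda | hda
    · -- d < a < c < b
      have fd : 0 < orin a b d :=
        orin_pos_left hd ha hb hda hab (fun h => h2 (tri3_rot h))
      have hflip : orin c d a * orin c d b = orin d c a * orin d c b := by unfold orin; ring
      have ga : orin d c a < 0 :=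
        orin_neg_in hd ha hc hda hac (fun h => h3 (tri3_rot h))
      have gb : 0 < orin d c b :=
        orin_pos_right hd hc hb (by linarith) hcb (fun h => h4 (tri3_rot (tri3_swap₂ h)))
      exact core ha hb hc hd h1 (mul_neg_of_neg_of_pos fc fd)
        (by rw [hflip]; exact mul_neg_of_neg_of_pos ga gb)
    · exfalso; apply hdd; rw [hda]; ring
    · have hbd : b < d := by
        rcases lt_trichotomy d b with h | h | h
        · exfalso; nlinarith
        · exfalso; apply hdd; rw [h]; ring
        · exact h
      -- a < c < b < d
      have fd : 0 < orin a b d := orin_pos_right ha hb hd hab hbd h2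
      have ga : 0 < orin c d a := orin_pos_left ha hc hd hac (by linarith) h3
      have gb : orin c d b < 0 :=
        orin_neg_in hc hb hd hcb hbd (fun h => h4 (tri3_swap₁ h))
      exact core ha hb hc hd h1 (mul_neg_of_neg_of_pos fc fd)
        (mul_neg_of_pos_of_neg ga gb)
  · have hdneg : (d - a) * (d - b) < 0 := neg_of_mul_neg_right hsep hcpos
    have had : a < d := by nlinarith
    have hdb : d < b := by nlinarith
    have fd : orin a b d < 0 := orin_neg_in ha hd hb had hdb (fun h => h2 (tri3_swap₂ h))
    rcases lt_trichotomy c a with hca | hca | hca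
    · -- c < a < d < b
      have fc : 0 < orin a b c :=
        orin_pos_left hc ha hb hca hab (fun h => h1 (tri3_rot h))
      have ga : orin c d a < 0 :=
        orin_neg_in hc ha hd hca had (fun h => h3 (tri3_swap₁ h))
      have gb : 0 < orin c d b :=
        orin_pos_right hc hd hb (by linarith) hdb (fun h => h4 (tri3_rot (tri3_rot h)))
      exact core ha hb hc hd h1 (mul_neg_of_pos_of_neg fc fd)
        (mul_neg_of_neg_of_pos ga gb)
    · exfalso; apply hcc; rw [hca]; ring
    · have hbc : b < c := by
        rcases lt_trichotomy c b with h | h | h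
        · exfalso; nlinarith
        · exfalso; apply hcc; rw [h]; ring
        · exact h
      -- a < d < b < c
      have fc : 0 < orin a b c := orin_pos_right ha hb hc hab hbc h1
      have hflip : orin c d a * orin c d b = orin d c a * orin d c b := by unfold orin; ring
      have ga : 0 < orin d c a :=
        orin_pos_left ha hd hc had (by linarith) (fun h => h3 (tri3_swap₂ h))
      have gb : orin d c b < 0 :=
        orin_neg_in hd hb hc hdb hbc (fun h => h4 (tri3_rot h))
      exact core ha hb hc hd h1 (mul_neg_of_pos_of_neg fc fd)
        (by rw [hflip]; exact mul_neg_of_pos_of_neg ga gb)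

lemma cross_of_sep {a b c d : ℝ} (ha : Rng a) (hb : Rng b) (hc : Rng c) (hd : Rng d)
    (h1 : ¬ Tri3 a b c) (h2 : ¬ Tri3 a b d) (h3 : ¬ Tri3 a c d) (h4 : ¬ Tri3 b c d)
    (hsep : ((c - a) * (c - b)) * ((d - a) * (d - b)) < 0) :
    ChordsCross a b c d := by
  rcases lt_trichotomy a b with h | h | h
  · exact cross_of_sep' ha hb hc hd h1 h2 h3 h4 h hsep
  · exfalso; rw [h] at hsep; nlinarith [sq_nonneg ((c - b) * (d - b))]
  · exact cross_swapAB (cross_of_sep' hb ha hc hd (fun hh => h1 (tri3_swap₁ hh))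
      (fun hh => h2 (tri3_swap₁ hh))
      h4 h3 h (by nlinarith))

lemma sep_of_cross' {a b c d : ℝ} (ha : Rng a) (hb : Rng b) (hc : Rng c) (hd : Rng d)
    (h1 : ¬ Tri3 a b c) (h2 : ¬ Tri3 a b d)
    (hab : a < b) (hca : c ≠ a) (hcb : c ≠ b) (hda : d ≠ a) (hdb : d ≠ b)
    (hx : ChordsCross a b c d) : ((c - a) * (c - b)) * ((d - a) * (d - b)) < 0 := by
  by_contra hcon
  push_neg at hcon
  have hne1 : (c - a) * (c - b) ≠ 0 := mul_ne_zero (sub_ne_zero.2 hca) (sub_ne_zero.2 hcb)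
  have hne2 : (d - a) * (d - b) ≠ 0 := mul_ne_zero (sub_ne_zero.2 hda) (sub_ne_zero.2 hdb)
  obtain ⟨q, hq, hqab, hqcd⟩ := hx
  obtain ⟨s, t', hs, ht, hst, hq1⟩ := hqab
  obtain ⟨w, x', hw, hx', hwx, hq2⟩ := hqcd
  have hfq0 : lf a b q = 0 := by
    rw [← hq1, lf_affine a b _ _ s t' hst, lf_orin, lf_orin, orin_self₁, orin_self₂]; ring
  have hfq : lf a b q = w * orin a b c + x' * orin a b d := by
    rw [← hq2, lf_affine a b _ _ w x' hwx, lf_orin, lf_orin]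
  rcases lt_or_gt_of_ne hne1 with hc1 | hc1
  · have hd1 : (d - a) * (d - b) < 0 := by
      rcases lt_or_gt_of_ne hne2 with h | h
      · exact h
      · exfalso; nlinarith
    have hac : a < c := by nlinarith
    have hcb' : c < b := by nlinarith
    have had : a < d := by nlinarith
    have hdb' : d < b := by nlinarith
    have fc : orin a b c < 0 := orin_neg_in ha hc hb hac hcb' (fun h => h1 (tri3_swap₂ h))
    have fd : orin a b d < 0 := orin_neg_in ha hd hb had hdb' (fun h => h2 (tri3_swap₂ h))
    have := comb_neg hwx hw hx' fc fd
    rw [hfq0] at hfq; linarith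
  · have hd1 : 0 < (d - a) * (d - b) := by
      rcases lt_or_gt_of_ne hne2 with h | h
      · exfalso; nlinarith
      · exact h
    have fc : 0 < orin a b c := by
      rcases lt_trichotomy c a with h | h | h
      · exact orin_pos_left hc ha hb h hab (fun hh => h1 (tri3_rot hh))
      · exact absurd h hca
      · have hbc : b < c := by
          rcases lt_trichotomy c b with h' | h' | h'
          · exfalso; nlinarith
          · exact absurd h' hcb
          · exact h'
        exact orin_pos_right ha hb hc hab hbc h1
    have fd : 0 < orin a b d := by
      rcases lt_trichotomy d a with h | h | h
      · exact orin_pos_left hd ha hb h hab (fun hh => h2 (tri3_rot hh))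
      · exact absurd h hda
      · have hbd : b < d := by
          rcases lt_trichotomy d b with h' | h' | h'
          · exfalso; nlinarith
          · exact absurd h' hdb
          · exact h'
        exact orin_pos_right ha hb hd hab hbd h2
    have := comb_pos hwx hw hx' fc fd
    rw [hfq0] at hfq; linarith

lemma sep_of_cross {a b c d : ℝ} (ha : Rng a) (hb : Rng b) (hc : Rng c) (hd : Rng d)
    (h1 : ¬ Tri3 a b c) (h2 : ¬ Tri3 a b d)
    (hab : a ≠ b) (hca : c ≠ a) (hcb : c ≠ b) (hda : d ≠ a) (hdb : d ≠ b)
    (hx : ChordsCross a b c d) : ((c - a) * (c - b)) * ((d - a) * (d - b)) < 0 := by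
  rcases lt_or_gt_of_ne hab with h | h
  · exact sep_of_cross' ha hb hc hd h1 h2 h hca hcb hda hdb hx
  · have := sep_of_cross' hb ha hc hd (fun hh => h1 (tri3_swap₁ hh))
      (fun hh => h2 (tri3_swap₁ hh)) h hcb hca hdb hda (cross_swapAB hx)
    nlinarith

lemma no_cross_pair {a b c d : ℝ} (k : ℕ) (hk : k ≤ 3) (ha1 : (k:ℝ) ≤ a) (ha2 : a < k+1)
    (hb1 : (k:ℝ) ≤ b) (hb2 : b < k+1) : ¬ ChordsCross a b c d := by
  rintro ⟨q, ⟨⟨hx0, hx1⟩, ⟨hy0, hy1⟩⟩, ⟨u, v, hu, hv, huv, hq⟩, -⟩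
  interval_cases k
  · have e1 : (sqBoundary a).2 = 0 := ycoord_eq_zero (by push_cast at ha2; linarith)
    have e2 : (sqBoundary b).2 = 0 := ycoord_eq_zero (by push_cast at hb2; linarith)
    have hq2 : q.2 = 0 := by
      rw [← hq]; simp [Prod.snd_add, Prod.smul_snd, e1, e2]
    linarith [hq2 ▸ hy0]
  · have e1 : (sqBoundary a).1 = 1 :=
      xcoord_eq_one (by push_cast at ha1; linarith) (by push_cast at ha2; linarith)
    have e2 : (sqBoundary b).1 = 1 :=
      xcoord_eq_one (by push_cast at hb1; linarith) (by push_cast at hb2; linarith)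
    have hq2 : q.1 = 1 := by
      rw [← hq]; simp [Prod.fst_add, Prod.smul_fst, e1, e2]; linarith
    linarith [hq2 ▸ hx1]
  · have e1 : (sqBoundary a).2 = 1 :=
      ycoord_eq_one (by push_cast at ha1; linarith) (by push_cast at ha2; linarith)
    have e2 : (sqBoundary b).2 = 1 :=
      ycoord_eq_one (by push_cast at hb1; linarith) (by push_cast at hb2; linarith)
    have hq2 : q.2 = 1 := by
      rw [← hq]; simp [Prod.snd_add, Prod.smul_snd, e1, e2]; linarith
    linarith [hq2 ▸ hy1]
  · have e1 : (sqBoundary a).1 = 0 :=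
      xcoord_eq_zero (by push_cast at ha1; linarith) (by push_cast at ha2; linarith)
    have e2 : (sqBoundary b).1 = 0 :=
      xcoord_eq_zero (by push_cast at hb1; linarith) (by push_cast at hb2; linarith)
    have hq2 : q.1 = 0 := by
      rw [← hq]; simp [Prod.fst_add, Prod.smul_fst, e1, e2]
    linarith [hq2 ▸ hx0]

/-! ### exactly-one-pairing combinatorics -/

lemma sep_two {a b c d : ℝ} (h : ((c - a) * (c - b)) * ((d - a) * (d - b)) < 0)
    (h' : ((b - a) * (b - c)) * ((d - a) * (d - c)) < 0) : False := by
  have hP1 : ((c - a) * (c - b)) * ((d - a) * (d - b)) =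
      ((a - d) * (b - c)) * ((a - d) * (b - c)) + ((a - d) * (b - c)) * ((a - b) * (c - d)) := by
    ring
  have hP2 : ((b - a) * (b - c)) * ((d - a) * (d - c)) =
      -(((a - d) * (b - c)) * ((a - b) * (c - d))) := by ring
  rw [hP1] at h
  rw [hP2] at h'
  nlinarith [sq_nonneg ((a - d) * (b - c))]

lemma sep_two13 {a b c d : ℝ} (h : ((c - a) * (c - b)) * ((d - a) * (d - b)) < 0)
    (h' : ((b - a) * (b - d)) * ((c - a) * (c - d)) < 0) : False :=
  sep_two (a := a) (b := b) (c := d) (d := c) (by nlinarith) (by nlinarith)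

lemma sep_two23 {a b c d : ℝ} (h : ((b - a) * (b - c)) * ((d - a) * (d - c)) < 0)
    (h' : ((b - a) * (b - d)) * ((c - a) * (c - d)) < 0) : False :=
  sep_two (a := a) (b := c) (c := d) (d := b) (by nlinarith) (by nlinarith)

lemma sep_exists {a b c d : ℝ} (hab : a ≠ b) (hac : a ≠ c) (had : a ≠ d)
    (hbc : b ≠ c) (hbd : b ≠ d) (hcd : c ≠ d) :
    ((c - a) * (c - b)) * ((d - a) * (d - b)) < 0 ∨
    ((b - a) * (b - c)) * ((d - a) * (d - c)) < 0 ∨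
    ((b - a) * (b - d)) * ((c - a) * (c - d)) < 0 := by
  by_contra hcon
  push_neg at hcon
  obtain ⟨g1, g2, g3⟩ := hcon
  have n1 : ((c - a) * (c - b)) * ((d - a) * (d - b)) ≠ 0 :=
    mul_ne_zero (mul_ne_zero (sub_ne_zero.2 hac.symm) (sub_ne_zero.2 hbc.symm))
      (mul_ne_zero (sub_ne_zero.2 had.symm) (sub_ne_zero.2 hbd.symm))
  have n2 : ((b - a) * (b - c)) * ((d - a) * (d - c)) ≠ 0 :=
    mul_ne_zero (mul_ne_zero (sub_ne_zero.2 hab.symm) (sub_ne_zero.2 hbc))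
      (mul_ne_zero (sub_ne_zero.2 had.symm) (sub_ne_zero.2 hcd.symm))
  have n3 : ((b - a) * (b - d)) * ((c - a) * (c - d)) ≠ 0 :=
    mul_ne_zero (mul_ne_zero (sub_ne_zero.2 hab.symm) (sub_ne_zero.2 hbd))
      (mul_ne_zero (sub_ne_zero.2 hac.symm) (sub_ne_zero.2 hcd))
  have p1 := lt_of_le_of_ne g1 (Ne.symm n1)
  have p2 := lt_of_le_of_ne g2 (Ne.symm n2)
  have p3 := lt_of_le_of_ne g3 (Ne.symm n3)
  have hP1 : ((c - a) * (c - b)) * ((d - a) * (d - b)) =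
      ((a - d) * (b - c)) * ((a - d) * (b - c)) + ((a - d) * (b - c)) * ((a - b) * (c - d)) := by
    ring
  have hP2 : ((b - a) * (b - c)) * ((d - a) * (d - c)) =
      -(((a - d) * (b - c)) * ((a - b) * (c - d))) := by ring
  have hP3 : ((b - a) * (b - d)) * ((c - a) * (c - d)) =
      ((a - b) * (c - d)) * ((a - b) * (c - d)) + ((a - d) * (b - c)) * ((a - b) * (c - d)) := by
    ring
  rw [hP1] at p1
  rw [hP2] at p2
  rw [hP3] at p3
  nlinarith [mul_pos p1 p3]

/-! ### pattern boxes -/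

def goodPat (s : Fin 4 → Fin 4) : Prop :=
  ∀ i j k : Fin 4, i ≠ j → i ≠ k → j ≠ k → ¬(s i = s j ∧ s i = s k)

instance : DecidablePred goodPat := fun s => by unfold goodPat; infer_instance

def patBox (s : Fin 4 → Fin 4) : Set (Fin 4 → ℝ) :=
  Set.pi univ fun i => Ico (((s i : ℕ) : ℝ)) (((s i : ℕ) : ℝ) + 1)

lemma patBox_meas (s : Fin 4 → Fin 4) : MeasurableSet (patBox s) :=
  MeasurableSet.pi (Set.to_countable _) fun _ _ => measurableSet_Ico

lemma patBox_vol (s : Fin 4 → Fin 4) : volume (patBox s) = 1 := by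
  rw [patBox, volume_pi_pi]
  simp [Real.volume_Ico]

lemma patBox_disj {s s' : Fin 4 → Fin 4} (hne : s ≠ s') :
    Disjoint (patBox s) (patBox s') := by
  rw [Set.disjoint_left]
  intro t hts hts'
  obtain ⟨i, hi⟩ := Function.ne_iff.1 hne
  obtain ⟨l1, l2⟩ := hts i (mem_univ i)
  obtain ⟨m1, m2⟩ := hts' i (mem_univ i)
  apply hi
  have : (s i : ℕ) = (s' i : ℕ) := by
    rcases Nat.lt_trichotomy (s i : ℕ) (s' i : ℕ) with h | h | h
    · exfalso
      have : ((s i : ℕ) : ℝ) + 1 ≤ ((s' i : ℕ) : ℝ) := by exact_mod_cast h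
      linarith
    · exact h
    · exfalso
      have : ((s' i : ℕ) : ℝ) + 1 ≤ ((s i : ℕ) : ℝ) := by exact_mod_cast h
      linarith
  exact Fin.ext this

def goodFinset : Finset (Fin 4 → Fin 4) := Finset.univ.filter goodPat

set_option maxRecDepth 4000 in
lemma goodFinset_card : goodFinset.card = 204 := by decide

def Uset : Set (Fin 4 → ℝ) := ⋃ s ∈ goodFinset, patBox s

lemma Uset_meas : MeasurableSet Uset :=
  Finset.measurableSet_biUnion _ fun s _ => patBox_meas s

lemma Uset_vol : volume Uset = 204 := by
  rw [Uset, measure_biUnion_finset (fun s _ s' _ h => patBox_disj h) fun s _ => patBox_meas s]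
  rw [Finset.sum_congr rfl fun s _ => patBox_vol s]
  simp [goodFinset_card]

/-! ### the null set -/

def Nbad : Set (Fin 4 → ℝ) :=
  (⋃ (i : Fin 4), ⋃ (n : Fin 5), {t | t i = ((n : ℕ) : ℝ)}) ∪
  ⋃ (i : Fin 4), ⋃ (j : Fin 4), ⋃ (_ : i ≠ j), {t | t i = t j}

lemma Nbad_null : volume Nbad = 0 := by
  rw [Nbad]
  apply measure_union_null
  · apply measure_iUnion_null; intro i; apply measure_iUnion_null; intro n
    rw [volume_pi]
    exact Measure.pi_hyperplane _ i _
  · apply measure_iUnion_null; intro i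
    apply measure_iUnion_null; intro j
    apply measure_iUnion_null; intro hij
    have hset : {t : Fin 4 → ℝ | t i = t j} =
        (LinearMap.ker ((LinearMap.proj i : (Fin 4 → ℝ) →ₗ[ℝ] ℝ) - LinearMap.proj j) :
          Submodule ℝ (Fin 4 → ℝ)) := by
      ext t
      simp [LinearMap.mem_ker, LinearMap.sub_apply, LinearMap.proj_apply, sub_eq_zero]
    rw [hset]
    apply Measure.addHaar_submodule
    intro htop
    have hmem : Function.update (0 : Fin 4 → ℝ) i 1 ∈
        LinearMap.ker ((LinearMap.proj i : (Fin 4 → ℝ) →ₗ[ℝ] ℝ) - LinearMap.proj j) := by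
      rw [htop]; exact Submodule.mem_top
    rw [LinearMap.mem_ker, LinearMap.sub_apply, LinearMap.proj_apply, LinearMap.proj_apply,
      Function.update_self, Function.update_of_ne (Ne.symm hij)] at hmem
    norm_num at hmem

/-! ### bridging -/

lemma rng_of {x : ℝ} (h0 : 0 ≤ x) (h4 : x < 4) (hn : ∀ n : Fin 5, x ≠ ((n : ℕ) : ℝ)) :
    Rng x := by
  have e0 : x ≠ 0 := by simpa using hn 0
  have e1 : x ≠ 1 := by simpa using hn 1
  have e2 : x ≠ 2 := by simpa using hn 2
  have e3 : x ≠ 3 := by simpa using hn 3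
  rcases lt_trichotomy x 1 with h | h | h
  · exact Or.inl ⟨lt_of_le_of_ne h0 (Ne.symm e0), h⟩
  · exact absurd h e1
  rcases lt_trichotomy x 2 with h2 | h2 | h2
  · exact Or.inr (Or.inl ⟨h, h2⟩)
  · exact absurd h2 e2
  rcases lt_trichotomy x 3 with h3 | h3 | h3
  · exact Or.inr (Or.inr (Or.inl ⟨h2, h3⟩))
  · exact absurd h3 e3
  · exact Or.inr (Or.inr (Or.inr ⟨h3, h4⟩))

/-- the side pattern of a parameter vector -/
noncomputable def pat (t : Fin 4 → ℝ) : Fin 4 → Fin 4 :=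
  fun i => ⟨(⌊t i⌋).toNat % 4, Nat.mod_lt _ (by norm_num)⟩

lemma floor_side {x : ℝ} (h0 : 0 ≤ x) (h4 : x < 4) :
    (((⌊x⌋).toNat % 4 : ℕ) : ℝ) ≤ x ∧ x < (((⌊x⌋).toNat % 4 : ℕ) : ℝ) + 1 := by
  have hf0 : 0 ≤ ⌊x⌋ := Int.floor_nonneg.2 h0
  have hf4 : ⌊x⌋ < 4 := Int.floor_lt.2 (by exact_mod_cast h4)
  have hlt : (⌊x⌋).toNat < 4 := by omega
  rw [Nat.mod_eq_of_lt hlt]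
  have hcast : (((⌊x⌋).toNat : ℕ) : ℝ) = ((⌊x⌋ : ℤ) : ℝ) := by
    exact_mod_cast Int.toNat_of_nonneg hf0
  rw [hcast]
  exact ⟨Int.floor_le x, Int.lt_floor_add_one x⟩

lemma pat_le {t : Fin 4 → ℝ} (hbox : ∀ i, t i ∈ Ico (0:ℝ) 4) (i : Fin 4) :
    ((pat t i : ℕ) : ℝ) ≤ t i ∧ t i < ((pat t i : ℕ) : ℝ) + 1 :=
  floor_side (hbox i).1 (hbox i).2

lemma pat_mem {t : Fin 4 → ℝ} (hbox : ∀ i, t i ∈ Ico (0:ℝ) 4) : t ∈ patBox (pat t) :=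
  fun i _ => ⟨(pat_le hbox i).1, (pat_le hbox i).2⟩

lemma in_patBox_side {x : ℝ} {n k : ℕ} (h1 : (n : ℝ) ≤ x) (h2 : x < n + 1)
    (hk3 : k ≤ 3) (hkx : (k : ℝ) ≤ x) (hkx' : x ≤ k + 1)
    (hnint : ∀ m : Fin 5, x ≠ ((m : ℕ) : ℝ)) : n = k := by
  rcases Nat.lt_trichotomy n k with h | h | h
  · exfalso
    have : ((n : ℕ) : ℝ) + 1 ≤ (k : ℕ) := by exact_mod_cast h
    linarith
  · exact h
  · exfalso
    have hc : ((k : ℕ) : ℝ) + 1 ≤ (n : ℕ) := by exact_mod_cast h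
    have hx : x = ((k + 1 : ℕ) : ℝ) := by push_cast; linarith
    exact hnint ⟨k + 1, by omega⟩ hx

lemma notri_of_good {t : Fin 4 → ℝ} {s : Fin 4 → Fin 4} (hmem : t ∈ patBox s)
    (hnint : ∀ i (n : Fin 5), t i ≠ ((n : ℕ) : ℝ)) (hgood : goodPat s)
    {i j k : Fin 4} (hij : i ≠ j) (hik : i ≠ k) (hjk : j ≠ k) :
    ¬ Tri3 (t i) (t j) (t k) := by
  rintro ⟨m, hm3, h1, h2, h3, h4, h5, h6⟩
  obtain ⟨bi1, bi2⟩ := hmem i (mem_univ i)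
  obtain ⟨bj1, bj2⟩ := hmem j (mem_univ j)
  obtain ⟨bk1, bk2⟩ := hmem k (mem_univ k)
  have ei : (s i : ℕ) = m := in_patBox_side bi1 bi2 hm3 h1 h2 (hnint i)
  have ej : (s j : ℕ) = m := in_patBox_side bj1 bj2 hm3 h3 h4 (hnint j)
  have ek : (s k : ℕ) = m := in_patBox_side bk1 bk2 hm3 h5 h6 (hnint k)
  exact hgood i j k hij hik hjk ⟨Fin.ext (ei.trans ej.symm), Fin.ext (ei.trans ek.symm)⟩

lemma triple_eq {s : Fin 4 → Fin 4} {i j k : Fin 4} (hij : i ≠ j) (hik : i ≠ k) (hjk : j ≠ k)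
    (h1 : s i = s j) (h2 : s i = s k) :
    (s 0 = s 1 ∨ s 2 = s 3) ∧ (s 0 = s 2 ∨ s 1 = s 3) ∧ (s 0 = s 3 ∨ s 1 = s 2) := by
  fin_cases i <;> fin_cases j <;> fin_cases k <;>
  first
    | (exact absurd rfl hij)
    | (exact absurd rfl hik)
    | (exact absurd rfl hjk)
    | (refine ⟨?_, ?_, ?_⟩ <;>
        first
          | exact Or.inl h1 | exact Or.inl h2 | exact Or.inl h1.symm | exact Or.inl h2.symm
          | exact Or.inl (h1.symm.trans h2) | exact Or.inl (h2.symm.trans h1)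
          | exact Or.inr h1 | exact Or.inr h2 | exact Or.inr h1.symm | exact Or.inr h2.symm
          | exact Or.inr (h1.symm.trans h2) | exact Or.inr (h2.symm.trans h1))

lemma not_good_pair {t : Fin 4 → ℝ} (hbox : ∀ i, t i ∈ Ico (0:ℝ) 4)
    (hbad : ¬ goodPat (pat t)) :
    (¬ ChordsCross (t 0) (t 1) (t 2) (t 3)) ∧ (¬ ChordsCross (t 0) (t 2) (t 1) (t 3)) ∧
    (¬ ChordsCross (t 0) (t 3) (t 1) (t 2)) := by
  unfold goodPat at hbad
  push_neg at hbad
  obtain ⟨i, j, k, hij, hik, hjk, h1, h2⟩ := hbad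
  obtain ⟨k1, k2, k3⟩ := triple_eq hij hik hjk h1 h2
  have hk : ∀ p : Fin 4, (pat t p : ℕ) ≤ 3 := fun p => Nat.lt_succ_iff.1 (pat t p).isLt
  have hb : ∀ p q : Fin 4, pat t p = pat t q → ∀ {c d : ℝ},
      ¬ ChordsCross (t p) (t q) c d := by
    intro p q hpq c d
    refine no_cross_pair (k := (pat t p : ℕ)) (hk p) (pat_le hbox p).1 (pat_le hbox p).2 ?_ ?_
    · rw [hpq]; exact (pat_le hbox q).1
    · rw [hpq]; exact (pat_le hbox q).2
  refine ⟨?_, ?_, ?_⟩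
  · rcases k1 with h | h
    · exact hb 0 1 h
    · exact fun hc => hb 2 3 h (cross_comm hc)
  · rcases k2 with h | h
    · exact hb 0 2 h
    · exact fun hc => hb 1 3 h (cross_comm hc)
  · rcases k3 with h | h
    · exact hb 0 3 h
    · exact fun hc => hb 1 2 h (cross_comm hc)

/-! ### the three separation sets -/

def sepSet₁ : Set (Fin 4 → ℝ) :=
  Uset ∩ {t | ((t 2 - t 0) * (t 2 - t 1)) * ((t 3 - t 0) * (t 3 - t 1)) < 0}

def sepSet₂ : Set (Fin 4 → ℝ) :=
  Uset ∩ {t | ((t 1 - t 0) * (t 1 - t 2)) * ((t 3 - t 0) * (t 3 - t 2)) < 0}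

def sepSet₃ : Set (Fin 4 → ℝ) :=
  Uset ∩ {t | ((t 1 - t 0) * (t 1 - t 3)) * ((t 2 - t 0) * (t 2 - t 3)) < 0}

lemma sepSet₁_meas : MeasurableSet sepSet₁ := by
  apply Uset_meas.inter
  apply measurableSet_lt _ measurable_const
  fun_prop

lemma sepSet₂_meas : MeasurableSet sepSet₂ := by
  apply Uset_meas.inter
  apply measurableSet_lt _ measurable_const
  fun_prop

lemma sepSet₃_meas : MeasurableSet sepSet₃ := by
  apply Uset_meas.inter
  apply measurableSet_lt _ measurable_const
  fun_prop

lemma nbad_facts {t : Fin 4 → ℝ} (hN : t ∉ Nbad) :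
    (∀ i (n : Fin 5), t i ≠ ((n : ℕ) : ℝ)) ∧ (∀ i j : Fin 4, i ≠ j → t i ≠ t j) := by
  constructor
  · intro i n h
    exact hN (Or.inl (mem_iUnion.2 ⟨i, mem_iUnion.2 ⟨n, h⟩⟩))
  · intro i j hij h
    exact hN (Or.inr (mem_iUnion.2 ⟨i, mem_iUnion.2 ⟨j, mem_iUnion.2 ⟨hij, h⟩⟩⟩))

lemma subset₁ :
    {t : Fin 4 → ℝ | (∀ i, t i ∈ Ico (0:ℝ) 4) ∧ ChordsCross (t 0) (t 1) (t 2) (t 3)} ⊆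
      sepSet₁ ∪ Nbad := by
  rintro t ⟨hbox, hcross⟩
  by_cases hN : t ∈ Nbad
  · exact Or.inr hN
  obtain ⟨hnint, hneq⟩ := nbad_facts hN
  have hgood : goodPat (pat t) := by
    by_contra hbad
    exact (not_good_pair hbox hbad).1 hcross
  have hmem := pat_mem hbox
  have hU : t ∈ Uset :=
    mem_iUnion₂.2 ⟨pat t, Finset.mem_filter.2 ⟨Finset.mem_univ _, hgood⟩, hmem⟩
  have rng : ∀ i, Rng (t i) := fun i => rng_of (hbox i).1 (hbox i).2 (hnint i)
  have notri : ∀ i j k : Fin 4, i ≠ j → i ≠ k → j ≠ k → ¬ Tri3 (t i) (t j) (t k) :=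
    fun i j k hij hik hjk => notri_of_good hmem hnint hgood hij hik hjk
  exact Or.inl ⟨hU, sep_of_cross (rng 0) (rng 1) (rng 2) (rng 3)
    (notri 0 1 2 (by decide) (by decide) (by decide))
    (notri 0 1 3 (by decide) (by decide) (by decide))
    (hneq 0 1 (by decide)) (hneq 2 0 (by decide)) (hneq 2 1 (by decide))
    (hneq 3 0 (by decide)) (hneq 3 1 (by decide)) hcross⟩

lemma subset₂ :
    {t : Fin 4 → ℝ | (∀ i, t i ∈ Ico (0:ℝ) 4) ∧ ChordsCross (t 0) (t 2) (t 1) (t 3)} ⊆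
      sepSet₂ ∪ Nbad := by
  rintro t ⟨hbox, hcross⟩
  by_cases hN : t ∈ Nbad
  · exact Or.inr hN
  obtain ⟨hnint, hneq⟩ := nbad_facts hN
  have hgood : goodPat (pat t) := by
    by_contra hbad
    exact (not_good_pair hbox hbad).2.1 hcross
  have hmem := pat_mem hbox
  have hU : t ∈ Uset :=
    mem_iUnion₂.2 ⟨pat t, Finset.mem_filter.2 ⟨Finset.mem_univ _, hgood⟩, hmem⟩
  have rng : ∀ i, Rng (t i) := fun i => rng_of (hbox i).1 (hbox i).2 (hnint i)
  have notri : ∀ i j k : Fin 4, i ≠ j → i ≠ k → j ≠ k → ¬ Tri3 (t i) (t j) (t k) :=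
    fun i j k hij hik hjk => notri_of_good hmem hnint hgood hij hik hjk
  exact Or.inl ⟨hU, sep_of_cross (rng 0) (rng 2) (rng 1) (rng 3)
    (notri 0 2 1 (by decide) (by decide) (by decide))
    (notri 0 2 3 (by decide) (by decide) (by decide))
    (hneq 0 2 (by decide)) (hneq 1 0 (by decide)) (hneq 1 2 (by decide))
    (hneq 3 0 (by decide)) (hneq 3 2 (by decide)) hcross⟩

lemma subset₃ :
    {t : Fin 4 → ℝ | (∀ i, t i ∈ Ico (0:ℝ) 4) ∧ ChordsCross (t 0) (t 3) (t 1) (t 2)} ⊆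
      sepSet₃ ∪ Nbad := by
  rintro t ⟨hbox, hcross⟩
  by_cases hN : t ∈ Nbad
  · exact Or.inr hN
  obtain ⟨hnint, hneq⟩ := nbad_facts hN
  have hgood : goodPat (pat t) := by
    by_contra hbad
    exact (not_good_pair hbox hbad).2.2 hcross
  have hmem := pat_mem hbox
  have hU : t ∈ Uset :=
    mem_iUnion₂.2 ⟨pat t, Finset.mem_filter.2 ⟨Finset.mem_univ _, hgood⟩, hmem⟩
  have rng : ∀ i, Rng (t i) := fun i => rng_of (hbox i).1 (hbox i).2 (hnint i)
  have notri : ∀ i j k : Fin 4, i ≠ j → i ≠ k → j ≠ k → ¬ Tri3 (t i) (t j) (t k) :=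
    fun i j k hij hik hjk => notri_of_good hmem hnint hgood hij hik hjk
  exact Or.inl ⟨hU, sep_of_cross (rng 0) (rng 3) (rng 1) (rng 2)
    (notri 0 3 1 (by decide) (by decide) (by decide))
    (notri 0 3 2 (by decide) (by decide) (by decide))
    (hneq 0 3 (by decide)) (hneq 1 0 (by decide)) (hneq 1 3 (by decide))
    (hneq 2 0 (by decide)) (hneq 2 3 (by decide)) hcross⟩

lemma box_of_Uset {t : Fin 4 → ℝ} {s : Fin 4 → Fin 4} (hmem : t ∈ patBox s) :
    ∀ i, t i ∈ Ico (0:ℝ) 4 := by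
  intro i
  obtain ⟨l1, l2⟩ := hmem i (mem_univ i)
  have hs3 : (s i : ℕ) ≤ 3 := Nat.lt_succ_iff.1 (s i).isLt
  constructor
  · exact le_trans (by positivity) l1
  · have h4 : ((s i : ℕ) : ℝ) + 1 ≤ 4 := by
      have : ((s i : ℕ) : ℝ) ≤ 3 := by exact_mod_cast hs3
      linarith
    linarith

lemma supset₁ :
    sepSet₁ \ Nbad ⊆
      {t : Fin 4 → ℝ | (∀ i, t i ∈ Ico (0:ℝ) 4) ∧ ChordsCross (t 0) (t 1) (t 2) (t 3)} := by
  rintro t ⟨⟨hU, hsep⟩, hN⟩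
  obtain ⟨hnint, hneq⟩ := nbad_facts hN
  obtain ⟨s, hsF, hmem⟩ := mem_iUnion₂.1 hU
  have hgood : goodPat s := (Finset.mem_filter.1 hsF).2
  have hbox := box_of_Uset hmem
  have rng : ∀ i, Rng (t i) := fun i => rng_of (hbox i).1 (hbox i).2 (hnint i)
  have notri : ∀ i j k : Fin 4, i ≠ j → i ≠ k → j ≠ k → ¬ Tri3 (t i) (t j) (t k) :=
    fun i j k hij hik hjk => notri_of_good hmem hnint hgood hij hik hjk
  exact ⟨hbox, cross_of_sep (rng 0) (rng 1) (rng 2) (rng 3)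
    (notri 0 1 2 (by decide) (by decide) (by decide))
    (notri 0 1 3 (by decide) (by decide) (by decide))
    (notri 0 2 3 (by decide) (by decide) (by decide))
    (notri 1 2 3 (by decide) (by decide) (by decide)) hsep⟩

lemma supset₂ :
    sepSet₂ \ Nbad ⊆
      {t : Fin 4 → ℝ | (∀ i, t i ∈ Ico (0:ℝ) 4) ∧ ChordsCross (t 0) (t 2) (t 1) (t 3)} := by
  rintro t ⟨⟨hU, hsep⟩, hN⟩
  obtain ⟨hnint, hneq⟩ := nbad_facts hN
  obtain ⟨s, hsF, hmem⟩ := mem_iUnion₂.1 hU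
  have hgood : goodPat s := (Finset.mem_filter.1 hsF).2
  have hbox := box_of_Uset hmem
  have rng : ∀ i, Rng (t i) := fun i => rng_of (hbox i).1 (hbox i).2 (hnint i)
  have notri : ∀ i j k : Fin 4, i ≠ j → i ≠ k → j ≠ k → ¬ Tri3 (t i) (t j) (t k) :=
    fun i j k hij hik hjk => notri_of_good hmem hnint hgood hij hik hjk
  exact ⟨hbox, cross_of_sep (rng 0) (rng 2) (rng 1) (rng 3)
    (notri 0 2 1 (by decide) (by decide) (by decide))
    (notri 0 2 3 (by decide) (by decide) (by decide))
    (notri 0 1 3 (by decide) (by decide) (by decide))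
    (notri 2 1 3 (by decide) (by decide) (by decide)) hsep⟩

lemma supset₃ :
    sepSet₃ \ Nbad ⊆
      {t : Fin 4 → ℝ | (∀ i, t i ∈ Ico (0:ℝ) 4) ∧ ChordsCross (t 0) (t 3) (t 1) (t 2)} := by
  rintro t ⟨⟨hU, hsep⟩, hN⟩
  obtain ⟨hnint, hneq⟩ := nbad_facts hN
  obtain ⟨s, hsF, hmem⟩ := mem_iUnion₂.1 hU
  have hgood : goodPat s := (Finset.mem_filter.1 hsF).2
  have hbox := box_of_Uset hmem
  have rng : ∀ i, Rng (t i) := fun i => rng_of (hbox i).1 (hbox i).2 (hnint i)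
  have notri : ∀ i j k : Fin 4, i ≠ j → i ≠ k → j ≠ k → ¬ Tri3 (t i) (t j) (t k) :=
    fun i j k hij hik hjk => notri_of_good hmem hnint hgood hij hik hjk
  exact ⟨hbox, cross_of_sep (rng 0) (rng 3) (rng 1) (rng 2)
    (notri 0 3 1 (by decide) (by decide) (by decide))
    (notri 0 3 2 (by decide) (by decide) (by decide))
    (notri 0 1 2 (by decide) (by decide) (by decide))
    (notri 3 1 2 (by decide) (by decide) (by decide)) hsep⟩

lemma disj₁₂ : Disjoint sepSet₁ sepSet₂ := by
  rw [Set.disjoint_left]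
  rintro t ⟨-, h1⟩ ⟨-, h2⟩
  exact sep_two h1 h2

lemma disj₁₃ : Disjoint sepSet₁ sepSet₃ := by
  rw [Set.disjoint_left]
  rintro t ⟨-, h1⟩ ⟨-, h2⟩
  exact sep_two13 h1 h2

lemma disj₂₃ : Disjoint sepSet₂ sepSet₃ := by
  rw [Set.disjoint_left]
  rintro t ⟨-, h1⟩ ⟨-, h2⟩
  exact sep_two23 h1 h2

lemma cover : Uset \ Nbad ⊆ sepSet₁ ∪ sepSet₂ ∪ sepSet₃ := by
  rintro t ⟨hU, hN⟩
  obtain ⟨-, hneq⟩ := nbad_facts hN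
  rcases sep_exists (hneq 0 1 (by decide)) (hneq 0 2 (by decide)) (hneq 0 3 (by decide))
    (hneq 1 2 (by decide)) (hneq 1 3 (by decide)) (hneq 2 3 (by decide)) with h | h | h
  · exact Or.inl (Or.inl ⟨hU, h⟩)
  · exact Or.inl (Or.inr ⟨hU, h⟩)
  · exact Or.inr ⟨hU, h⟩

lemma vol_eq_of_sandwich {T S : Set (Fin 4 → ℝ)} (hsub : T ⊆ S ∪ Nbad)
    (hsup : S \ Nbad ⊆ T) : volume T = volume S :=
  le_antisymm
    ((measure_mono hsub).trans ((measure_union_le _ _).trans (by rw [Nbad_null, add_zero])))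
    (calc volume S = volume (S \ Nbad) := (measure_diff_null Nbad_null).symm
      _ ≤ volume T := measure_mono hsup)

lemma total_vol :
    volume {t : Fin 4 → ℝ | (∀ i, t i ∈ Ico (0:ℝ) 4) ∧ ChordsCross (t 0) (t 1) (t 2) (t 3)}
    + volume {t : Fin 4 → ℝ | (∀ i, t i ∈ Ico (0:ℝ) 4) ∧ ChordsCross (t 0) (t 2) (t 1) (t 3)}
    + volume {t : Fin 4 → ℝ | (∀ i, t i ∈ Ico (0:ℝ) 4) ∧ ChordsCross (t 0) (t 3) (t 1) (t 2)}
    = 204 := by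
  rw [vol_eq_of_sandwich subset₁ supset₁, vol_eq_of_sandwich subset₂ supset₂,
    vol_eq_of_sandwich subset₃ supset₃]
  have hsum : volume sepSet₁ + volume sepSet₂ + volume sepSet₃ =
      volume (sepSet₁ ∪ sepSet₂ ∪ sepSet₃) := by
    rw [measure_union (Set.disjoint_union_left.2 ⟨disj₁₃, disj₂₃⟩) sepSet₃_meas,
      measure_union disj₁₂ sepSet₂_meas]
  rw [hsum]
  have h1 : volume (sepSet₁ ∪ sepSet₂ ∪ sepSet₃) = volume Uset := by
    apply le_antisymm
    · apply measure_mono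
      apply Set.union_subset (Set.union_subset _ _) _
      · exact Set.inter_subset_left
      · exact Set.inter_subset_left
      · exact Set.inter_subset_left
    · have huu : volume Uset = volume (Uset \ Nbad) := (measure_diff_null Nbad_null).symm
      rw [huu]
      exact measure_mono cover
  rw [h1, Uset_vol]

end SqCross

/-- Four points are chosen i.i.d. uniformly on the perimeter of the unit square
(parametrized by `[0,4)⁴`, of total measure `4⁴ = 256`) and paired into two chords
by one of the three perfect matchings, chosen uniformly.  The probability that the
two chords intersect in the interior of the square is `17/64`
(i.e. `17/64 · 256 = 68` on the unnormalized measure). -/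
theorem chords_cross_probability :
    (1 / 3 : ENNReal) *
        (volume {t : Fin 4 → ℝ | (∀ i, t i ∈ Ico (0:ℝ) 4) ∧
            ChordsCross (t 0) (t 1) (t 2) (t 3)}
          + volume {t : Fin 4 → ℝ | (∀ i, t i ∈ Ico (0:ℝ) 4) ∧
            ChordsCross (t 0) (t 2) (t 1) (t 3)}
          + volume {t : Fin 4 → ℝ | (∀ i, t i ∈ Ico (0:ℝ) 4) ∧
            ChordsCross (t 0) (t 3) (t 1) (t 2)})
      = (17 / 64) * 4 ^ 4 := by
  rw [SqCross.total_vol]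
  rw [show ((4:ENNReal)^4) = 64 * 4 by norm_num, ← mul_assoc,
    ENNReal.div_mul_cancel (by norm_num) (by norm_num),
    show ((204:ENNReal)) = 3 * 68 by norm_num, one_div, ← mul_assoc,
    ENNReal.inv_mul_cancel (by norm_num) (by norm_num)]
  norm_num
end

section
/- For every n ≥ k ≥ 3 and every m with 0 ≤ m ≤ C(n,k), there exists a partition of 1 into n positive real lengths such that exactly m of the C(n,k) k-element subsets of pieces can form a (non-degenerate) k-gon. -/
/-!
Write `m = C(q, k) + r` with `q < n` and `r ≤ C(q, k - 1)` (Pascal's rule). Take `q` pieces in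
`(1, 2)` whose sums over sets of equal size are pairwise distinct, then one piece `M ≥ 2`, then a
superincreasing tail. Every `k`-set of small pieces is a polygon, no set meeting the tail is, and
a `(k - 1)`-set `T` of small pieces together with `M` is a polygon iff `M < ∑ T`. As these sums
are distinct, `M` can be placed so that exactly `r` of them exceed it. Rescaling to total length
`1` changes nothing.
-/

open Finset

theorem Finset.exists_card_filter_lt_eq {α : Type*} [LinearOrder α] (s : Finset α) {x₀ : α}
    (hx₀ : ∀ x ∈ s, x₀ < x) {r : ℕ} (hr : r ≤ #s) : ∃ M ∈ insert x₀ s, #{x ∈ s | M < x} = r := by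
  induction s using Finset.induction_on_max generalizing r with
  | empty => exact ⟨x₀, mem_insert_self _ _, by simp_all⟩
  | insert a s hlt ih =>
    have ha : a ∉ s := fun h => (hlt a h).false
    rw [card_insert_of_notMem ha] at hr
    rcases r with _ | r
    · refine ⟨a, by simp, ?_⟩
      rw [card_eq_zero, filter_eq_empty_iff]
      simp only [mem_insert, forall_eq_or_imp, lt_self_iff_false, not_false_eq_true, true_and]
      exact fun x hx => (hlt x hx).not_gt
    · obtain ⟨M, hM, hcard⟩ := ih (fun x hx => hx₀ x (mem_insert_of_mem hx)) (r := r) (by omega)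
      have hMa : M < a := by
        rcases mem_insert.mp hM with rfl | hM
        · exact hx₀ a (mem_insert_self _ _)
        · exact hlt M hM
      refine ⟨M, insert_subset_insert _ (subset_insert _ _) hM, ?_⟩
      rw [filter_insert, if_pos hMa, card_insert_of_notMem (fun h => ha (mem_filter.mp h).1), hcard]

theorem Finset.exists_card_filter_lt_apply_eq {ι : Type*} [DecidableEq ι] {s : Finset ι}
    {f : ι → ℝ} (hf : Set.InjOn f s) {x₀ : ℝ} (hx₀ : ∀ i ∈ s, x₀ < f i) {r : ℕ} (hr : r ≤ #s) :
    ∃ M ∈ insert x₀ (s.image f), #{i ∈ s | M < f i} = r := by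
  obtain ⟨M, hM, hcard⟩ := (s.image f).exists_card_filter_lt_eq (x₀ := x₀)
    (by simpa using hx₀) (r := r) (by rwa [card_image_of_injOn hf])
  refine ⟨M, hM, ?_⟩
  rwa [filter_image, card_image_of_injOn (hf.mono (filter_subset _ _))] at hcard

theorem Nat.exists_eq_choose_add_of_le_choose {n k m : ℕ} (hn : 0 < n)
    (hm : m ≤ n.choose (k + 1)) : ∃ q < n, ∃ r ≤ q.choose k, q.choose (k + 1) + r = m := by
  induction n with
  | zero => exact absurd hn (lt_irrefl 0)
  | succ n ih =>
    rw [Nat.choose_succ_succ'] at hm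
    by_cases h : n.choose (k + 1) ≤ m
    · exact ⟨n, n.lt_succ_self, m - n.choose (k + 1), by omega, by omega⟩
    · have hn : 0 < n := Nat.pos_of_ne_zero fun h0 => h (by simp [h0])
      obtain ⟨q, hq, r, hr, rfl⟩ := ih hn (by omega)
      exact ⟨q, hq.trans n.lt_succ_self, r, hr, rfl⟩

def FormsPolygon {ι : Type*} [DecidableEq ι] (a : ι → ℝ) (S : Finset ι) : Prop :=
  ∀ i ∈ S, a i < ∑ j ∈ S.erase i, a j

section FormsPolygon

variable {ι : Type*} [DecidableEq ι] {a : ι → ℝ} {S T : Finset ι}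

noncomputable instance : DecidablePred (FormsPolygon a) := fun S =>
  inferInstanceAs (Decidable (∀ i ∈ S, a i < ∑ j ∈ S.erase i, a j))

theorem formsPolygon_div_iff {c : ℝ} (hc : 0 < c) :
    FormsPolygon (fun i => a i / c) S ↔ FormsPolygon a S := by
  simp only [FormsPolygon, ← sum_div, div_lt_div_iff_of_pos_right hc]

theorem formsPolygon_of_forall_mem_Ioo (hS : ∀ i ∈ S, a i ∈ Set.Ioo 1 2) (hcard : 3 ≤ #S) :
    FormsPolygon a S := by
  intro i hi
  have hne : (S.erase i).Nonempty := card_pos.mp (by rw [card_erase_of_mem hi]; omega)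
  have hlt : ((S.erase i).card : ℝ) < ∑ j ∈ S.erase i, a j := by
    simpa using sum_lt_sum_of_nonempty hne fun j hj => (hS j (mem_of_mem_erase hj)).1
  have h2 : (2 : ℝ) ≤ #(S.erase i) := by
    rw [card_erase_of_mem hi]; exact_mod_cast (by omega : 2 ≤ #S - 1)
  linarith [(hS i hi).2]

theorem formsPolygon_insert_iff {j : ι} (hj : j ∉ T) (hnonneg : ∀ i ∈ T, 0 ≤ a i)
    (hlt : ∀ i ∈ T, a i < a j) : FormsPolygon a (insert j T) ↔ a j < ∑ i ∈ T, a i := by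
  rw [FormsPolygon, forall_mem_insert, erase_insert hj, and_iff_left_iff_imp]
  intro _ i hi
  have hji : j ≠ i := fun h => hj (h ▸ hi)
  rw [erase_insert_of_ne hji, sum_insert (fun h => hj (mem_of_mem_erase h))]
  linarith [hlt i hi, sum_nonneg fun l (hl : l ∈ T.erase i) => hnonneg l (mem_of_mem_erase hl)]

theorem card_filter_formsPolygon_powersetCard_insert {B : Finset ι} {j : ι} (hj : j ∉ B)
    (hB : ∀ i ∈ B, a i ∈ Set.Ioo 1 2) (haj : 2 ≤ a j) {k : ℕ} (hk : 2 ≤ k) :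
    #{S ∈ (insert j B).powersetCard (k + 1) | FormsPolygon a S} =
      (#B).choose (k + 1) + #{T ∈ B.powersetCard k | a j < ∑ i ∈ T, a i} := by
  have hsmall : ∀ T ∈ B.powersetCard k, FormsPolygon a (insert j T) ↔ a j < ∑ i ∈ T, a i := by
    intro T hT
    have hTB := (mem_powersetCard.mp hT).1
    exact formsPolygon_insert_iff (fun h => hj (hTB h))
      (fun i hi => zero_le_one.trans (hB i (hTB hi)).1.le)
      fun i hi => (hB i (hTB hi)).2.trans_le haj
  rw [powersetCard_succ_insert hj, filter_union, card_union_of_disjoint, filter_true_of_mem,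
    card_powersetCard, filter_image, card_image_of_injOn, filter_congr hsmall]
  · exact insert_erase_invOn.2.injOn.mono fun T hT =>
      fun h => hj ((mem_powersetCard.mp (mem_filter.mp hT).1).1 h)
  · intro S hS
    obtain ⟨hSB, hSc⟩ := mem_powersetCard.mp hS
    exact formsPolygon_of_forall_mem_Ioo (fun i hi => hB i (hSB hi)) (by omega)
  · refine disjoint_left.mpr fun S hS hS' => ?_
    obtain ⟨T, -, rfl⟩ := mem_image.mp (mem_filter.mp hS').1
    exact hj ((mem_powersetCard.mp (mem_filter.mp hS).1).1 (mem_insert_self j T))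

end FormsPolygon

theorem Fin.sum_two_pow_val_injective (n : ℕ) :
    Function.Injective fun T : Finset (Fin n) => ∑ i ∈ T, 2 ^ (i : ℕ) := by
  intro T T' h
  refine (map_inj (f := Fin.valEmbedding)).mp (geomSum_injective (n := 2) le_rfl ?_)
  simpa only [sum_map, Fin.valEmbedding_apply] using h

theorem Fin.sum_mul_two_pow_lt {n : ℕ} {a : Fin n → ℝ} {c : ℝ} (hc : 0 < c)
    (ha : ∀ i, a i ≤ c * 2 ^ (i : ℕ)) {T : Finset (Fin n)} {j : Fin n} (hT : ∀ i ∈ T, i < j) :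
    ∑ i ∈ T, a i < c * 2 ^ (j : ℕ) := by
  have hgeom : ∑ x ∈ T.map Fin.valEmbedding, 2 ^ x < 2 ^ (j : ℕ) :=
    Nat.geomSum_lt le_rfl (by simpa using hT)
  calc ∑ i ∈ T, a i ≤ ∑ i ∈ T, c * 2 ^ (i : ℕ) := sum_le_sum fun i _ => ha i
    _ = c * ((∑ x ∈ T.map Fin.valEmbedding, 2 ^ x : ℕ) : ℝ) := by
      rw [← mul_sum, sum_map]; push_cast; rfl
    _ < c * 2 ^ (j : ℕ) := by gcongr; exact_mod_cast hgeom

theorem subset_Iic_of_formsPolygon {n : ℕ} {a : Fin n → ℝ} {c : ℝ} (hc : 0 < c)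
    (ha : ∀ i, a i ≤ c * 2 ^ (i : ℕ)) {q : Fin n} (htail : ∀ i, q < i → a i = c * 2 ^ (i : ℕ))
    {S : Finset (Fin n)} (hS : FormsPolygon a S) : S ⊆ Iic q := by
  intro i hi
  by_contra hiq
  have hSne : S.Nonempty := ⟨i, hi⟩
  set j := S.max' hSne
  have hqj : q < j := (not_le.mp (by simpa using hiq)).trans_le (S.le_max' i hi)
  have hsum := Fin.sum_mul_two_pow_lt hc ha (T := S.erase j)
    fun l hl => lt_of_le_of_ne (S.le_max' l (mem_of_mem_erase hl)) (ne_of_mem_erase hl)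
  linarith [hS j (S.max'_mem hSne), htail j hqj]

noncomputable def perturbedOne (n : ℕ) (i : Fin n) : ℝ := 1 + 2 ^ (i : ℕ) / 2 ^ n

theorem perturbedOne_mem_Ioo {n : ℕ} (i : Fin n) : perturbedOne n i ∈ Set.Ioo 1 2 := by
  have h : (2 : ℝ) ^ (i : ℕ) < 2 ^ n := pow_lt_pow_right₀ one_lt_two i.isLt
  constructor
  · unfold perturbedOne; have : (0 : ℝ) < 2 ^ (i : ℕ) / 2 ^ n := by positivity
    linarith
  · unfold perturbedOne; have : (2 : ℝ) ^ (i : ℕ) / 2 ^ n < 1 := (div_lt_one (by positivity)).mpr h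
    linarith

theorem sum_perturbedOne {n : ℕ} (T : Finset (Fin n)) :
    ∑ i ∈ T, perturbedOne n i = #T + ((∑ i ∈ T, 2 ^ (i : ℕ) : ℕ) : ℝ) / 2 ^ n := by
  simp [perturbedOne, sum_add_distrib, sum_div]

theorem injOn_sum_perturbedOne (n k : ℕ) :
    Set.InjOn (fun T : Finset (Fin n) => ∑ i ∈ T, perturbedOne n i) {T | #T = k} := by
  intro T hT T' hT' h
  rw [Set.mem_ofPred] at hT hT'
  simp only [sum_perturbedOne, hT, hT', add_right_inj,
    div_left_inj' (pow_ne_zero n (two_ne_zero (α := ℝ))), Nat.cast_inj] at h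
  exact Fin.sum_two_pow_val_injective n h

-- `2 * n` bounds every piece up to index `q`, which makes the tail superincreasing.
noncomputable def thresholdLengths {n : ℕ} (q : Fin n) (M : ℝ) (i : Fin n) : ℝ :=
  if i < q then perturbedOne n i else if i = q then M else 2 * n * 2 ^ (i : ℕ)

section thresholdLengths

variable {n : ℕ} {q : Fin n} {M : ℝ}

theorem thresholdLengths_pos (hM : 0 < M) (i : Fin n) : 0 < thresholdLengths q M i := by
  unfold thresholdLengths
  split_ifs
  · exact zero_lt_one.trans (perturbedOne_mem_Ioo i).1
  · exact hM
  · have : 0 < n := i.pos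
    positivity

theorem thresholdLengths_le (hM : M ≤ 2 * n) (i : Fin n) :
    thresholdLengths q M i ≤ 2 * n * 2 ^ (i : ℕ) := by
  have hn : (1 : ℝ) ≤ n := by exact_mod_cast i.pos
  have h2n : 2 * n ≤ 2 * (n : ℝ) * 2 ^ (i : ℕ) := le_mul_of_one_le_right (by positivity)
    (one_le_pow₀ one_le_two)
  unfold thresholdLengths
  split_ifs
  · linarith [(perturbedOne_mem_Ioo i).2]
  · linarith
  · exact le_rfl

theorem card_filter_formsPolygon_thresholdLengths {k : ℕ} (hk : 2 ≤ k) (hM : 2 ≤ M)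
    (hM' : M ≤ 2 * n) :
    #{S ∈ (univ : Finset (Fin n)).powersetCard (k + 1) | FormsPolygon (thresholdLengths q M) S} =
      (q : ℕ).choose (k + 1) + #{T ∈ (Iio q).powersetCard k | M < ∑ i ∈ T, perturbedOne n i} := by
  have hn : (0 : ℝ) < 2 * n := by have : 0 < n := q.pos; positivity
  have hsmall : ∀ i ∈ Iio q, thresholdLengths q M i = perturbedOne n i := fun i hi =>
    if_pos (mem_Iio.mp hi)
  have hpolygons :
      {S ∈ (univ : Finset (Fin n)).powersetCard (k + 1) | FormsPolygon (thresholdLengths q M) S} =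
        {S ∈ (Iic q).powersetCard (k + 1) | FormsPolygon (thresholdLengths q M) S} := by
    ext S
    simp only [mem_filter, mem_powersetCard, subset_univ, true_and, and_congr_left_iff]
    refine fun hS => ⟨fun hcard => ⟨subset_Iic_of_formsPolygon hn (thresholdLengths_le hM') ?_ hS,
      hcard⟩, And.right⟩
    intro i hqi
    simp [thresholdLengths, hqi.ne', not_lt.mpr hqi.le]
  rw [hpolygons, ← Iio_insert, card_filter_formsPolygon_powersetCard_insert notMem_Iio_self
    (fun i hi => hsmall i hi ▸ perturbedOne_mem_Ioo i) (by simpa [thresholdLengths]) hk,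
    Fin.card_Iio]
  congr 2
  refine filter_congr fun T hT => ?_
  rw [sum_congr rfl fun i hi => hsmall i ((mem_powersetCard.mp hT).1 hi)]
  simp [thresholdLengths]

end thresholdLengths

theorem exists_pos_card_filter_formsPolygon_eq {n k r : ℕ} (hk : 2 ≤ k) (q : Fin n)
    (hr : r ≤ (q : ℕ).choose k) :
    ∃ a : Fin n → ℝ, (∀ i, 0 < a i) ∧
      #{S ∈ (univ : Finset (Fin n)).powersetCard (k + 1) | FormsPolygon a S} =
        (q : ℕ).choose (k + 1) + r := by
  set F := (Iio q).powersetCard k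
  have hlow : ∀ T ∈ F, 2 < ∑ i ∈ T, perturbedOne n i := by
    intro T hT
    have hTk := (mem_powersetCard.mp hT).2
    have hTne : T.Nonempty := card_pos.mp (by omega)
    have := sum_lt_sum_of_nonempty hTne fun i _ => (perturbedOne_mem_Ioo i).1
    simp only [sum_const, hTk, nsmul_eq_mul, mul_one] at this
    exact lt_of_le_of_lt (by exact_mod_cast hk) this
  have hhigh : ∀ T : Finset (Fin n), ∑ i ∈ T, perturbedOne n i ≤ 2 * n := by
    intro T
    calc ∑ i ∈ T, perturbedOne n i ≤ ∑ _ ∈ T, (2 : ℝ) :=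
          sum_le_sum fun i _ => (perturbedOne_mem_Ioo i).2.le
      _ ≤ 2 * n := by
        simpa [mul_comm] using mul_le_mul_of_nonneg_left
          (by exact_mod_cast card_le_univ T : (#T : ℝ) ≤ Fintype.card (Fin n)) zero_le_two
  obtain ⟨M, hM, hcount⟩ := exists_card_filter_lt_apply_eq
    ((injOn_sum_perturbedOne n k).mono fun T hT => (mem_powersetCard.mp hT).2) hlow
    (by rwa [card_powersetCard, Fin.card_Iio] : r ≤ #F)
  have hMbounds : 2 ≤ M ∧ M ≤ 2 * n := by
    rcases mem_insert.mp hM with rfl | hM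
    · exact ⟨le_rfl, by linarith [(Nat.one_le_cast (α := ℝ)).mpr q.pos]⟩
    · obtain ⟨T, hT, rfl⟩ := mem_image.mp hM
      exact ⟨(hlow T hT).le, hhigh T⟩
  exact ⟨thresholdLengths q M, thresholdLengths_pos (by linarith [hMbounds.1]),
    by rw [card_filter_formsPolygon_thresholdLengths hk hMbounds.1 hMbounds.2, hcount]⟩

/-- For every `n ≥ k ≥ 3` and every `0 ≤ m ≤ C(n,k)` there is a partition of `1`
into `n` positive lengths such that exactly `m` of the `k`-element subsets of the
pieces can form a non-degenerate `k`-gon (i.e. every piece in the subset is strictly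
smaller than the sum of the other `k−1` pieces). -/
theorem exists_partition_with_exactly_m_kgons (n k m : ℕ)
    (hk : 3 ≤ k) (hkn : k ≤ n) (hm : m ≤ n.choose k) :
    ∃ a : Fin n → ℝ, (∀ i, 0 < a i) ∧ (∑ i, a i = 1) ∧
      ((Finset.univ.powersetCard k).filter
          (fun S : Finset (Fin n) => ∀ i ∈ S, a i < ∑ j ∈ S.erase i, a j)).card = m := by
  obtain ⟨k, rfl⟩ : ∃ l, k = l + 1 := ⟨k - 1, by omega⟩
  obtain ⟨q, hq, r, hr, rfl⟩ := Nat.exists_eq_choose_add_of_le_choose (by omega) hm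
  obtain ⟨a, hpos, hcount⟩ := exists_pos_card_filter_formsPolygon_eq (by omega) ⟨q, hq⟩ hr
  have htotal : 0 < ∑ i, a i := sum_pos (fun i _ => hpos i) (univ_nonempty_iff.mpr ⟨⟨q, hq⟩⟩)
  refine ⟨fun i => a i / ∑ j, a j, fun i => div_pos (hpos i) htotal,
    by rw [← sum_div, div_self htotal.ne'], ?_⟩
  rw [← hcount]
  exact congrArg card (filter_congr fun S _ => formsPolygon_div_iff htotal)
end

section
/- If a stick is broken into n pieces and the pieces are uniform spacings, the probability that all n pieces form an n-gon (i.e., every piece is less than 1/2) is 1 − n/2^{n−1}. -/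
/-!
A piece of length at least `ℓ` starts either at `0` or at a breakpoint `ω i`, and the open
interval of length `ℓ` after its left end contains no breakpoint. For `ℓ ≥ 1/2` two such pieces
coexist only on a null set, so the event "some piece is `≥ ℓ`" is an a.e. disjoint union of
`m + 1` events. Each has probability `(1 - ℓ) ^ m`: when the piece starts at `0`, each of the
`m` breakpoints avoids an interval of length `ℓ`; when it starts at `ω i`, Fubini over
`ω i ∈ [0, 1 - ℓ]` leaves the other `m - 1` breakpoints avoiding such an interval.
-/

open MeasureTheory Set

/-- The list of spacings (piece lengths) of `[0,1]` determined by the breakpoints `ω`. -/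
noncomputable def spacings (m : ℕ) (ω : Fin m → ℝ) : List ℝ :=
  let sorted := ((0 : ℝ) :: (List.ofFn ω ++ [1])).insertionSort (· ≤ ·)
  List.zipWith (fun a b => b - a) sorted sorted.tail

theorem List.forall_mem_zipWith_tail_iff_isChain {α β : Type*} {f : α → α → β} {p : β → Prop}
    {l : List α} : (∀ x ∈ zipWith f l l.tail, p x) ↔ l.IsChain fun a b => p (f a b) := by
  induction l with
  | nil => simp
  | cons a l ih => cases l with
    | nil => simp
    | cons b l => simpa using fun _ => ih

theorem List.SortedLE.isChain_sub_lt_iff {α : Type*} [AddCommGroup α] [LinearOrder α]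
    [IsOrderedAddMonoid α] {S : List α} (hS : S.SortedLE) {ℓ : α} (hℓ : 0 < ℓ) :
    S.IsChain (fun a b => b - a < ℓ) ↔
      ¬ ∃ a ∈ S, (∃ b ∈ S, a + ℓ ≤ b) ∧ ∀ x ∈ S, x ∉ Ioo a (a + ℓ) := by
  constructor
  · rintro hchain ⟨a, ha, ⟨b, hb, hab⟩, hgap⟩
    have hstep := hchain.imp_of_mem_imp (S := fun x y => y - x < ℓ ∧ y ∉ Ioo a (a + ℓ))
      fun x y _ hy hxy => ⟨hxy, hgap y hy⟩
    -- steps shorter than `ℓ` starting below `a` cannot jump over `Ioo a (a + ℓ)`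
    have hle : ∀ x ∈ S, x ≤ a := by
      refine hstep.induction _ _ (fun x y ⟨hxy, hy⟩ hx => ?_) fun _ => ?_
      · by_contra! h
        exact hy ⟨h, (sub_lt_iff_lt_add'.1 hxy).trans_le (add_le_add_left hx ℓ)⟩
      · obtain ⟨i, hi, rfl⟩ := List.getElem_of_mem ha
        rw [List.head_eq_getElem]
        exact hS.getElem_le_getElem_of_le (Nat.zero_le i)
    exact (lt_add_of_pos_right a hℓ).not_ge (hab.trans (hle b hb))
  · intro hno
    by_contra hchain
    obtain ⟨n, hn, hstep⟩ := List.exists_not_getElem_of_not_isChain hchain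
    have hab : S[n] + ℓ ≤ S[n + 1] := le_sub_iff_add_le'.1 (not_lt.1 hstep)
    refine hno ⟨S[n], List.getElem_mem _, ⟨S[n + 1], List.getElem_mem _, hab⟩, fun x hx hxI => ?_⟩
    obtain ⟨k, hk, rfl⟩ := List.getElem_of_mem hx
    rcases le_or_gt k n with hkn | hkn
    · exact hxI.1.not_ge (hS.getElem_le_getElem_of_le hkn)
    · exact hxI.2.not_ge (hab.trans (hS.getElem_le_getElem_of_le hkn))

/-- The piece starting at `0` (for `o = none`) or at the breakpoint `ω i` (for `o = some i`)
has length at least `ℓ`. -/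
def longGapEvent (m : ℕ) (ℓ : ℝ) (o : Option (Fin m)) : Set (Fin m → ℝ) :=
  {ω | (∀ i, ω i ∈ Icc 0 1) ∧ o.elim 0 ω + ℓ ≤ 1 ∧ ∀ j, ω j ∉ Ioo (o.elim 0 ω) (o.elim 0 ω + ℓ)}

theorem forall_spacings_lt_iff {m : ℕ} {ω : Fin m → ℝ} (hω : ∀ i, ω i ∈ Icc 0 1) {ℓ : ℝ}
    (hℓ : 0 < ℓ) : (∀ g ∈ spacings m ω, g < ℓ) ↔ ∀ o, ω ∉ longGapEvent m ℓ o := by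
  rw [spacings, List.forall_mem_zipWith_tail_iff_isChain,
    List.sortedLE_insertionSort.isChain_sub_lt_iff hℓ]
  simp only [(List.perm_insertionSort _ _).mem_iff]
  refine Iff.trans (not_congr ?_) not_exists
  set L : List ℝ := 0 :: (List.ofFn ω ++ [1])
  have hmem : ∀ x, x ∈ L ↔ x = 0 ∨ (∃ i, ω i = x) ∨ x = 1 := by simp [L]
  have hL : ∀ x ∈ L, x ∈ Icc (0 : ℝ) 1 := by
    simp only [hmem]
    rintro x (rfl | ⟨i, rfl⟩ | rfl)
    exacts [⟨le_rfl, zero_le_one⟩, hω i, ⟨zero_le_one, le_rfl⟩]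
  have long_gap_iff : ∀ a, 0 ≤ a → (((∃ b ∈ L, a + ℓ ≤ b) ∧ ∀ x ∈ L, x ∉ Ioo a (a + ℓ)) ↔
      a + ℓ ≤ 1 ∧ ∀ j, ω j ∉ Ioo a (a + ℓ)) := by
    intro a ha
    constructor
    · rintro ⟨⟨b, hb, hab⟩, hgap⟩
      exact ⟨hab.trans (hL b hb).2, fun j => hgap _ (by simp [hmem])⟩
    · rintro ⟨hle, hgap⟩
      refine ⟨⟨1, by simp [hmem], hle⟩, fun x hx => ?_⟩
      rcases (hmem x).1 hx with rfl | ⟨j, rfl⟩ | rfl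
      · exact fun h => h.1.not_ge ha
      · exact hgap j
      · exact fun h => h.2.not_ge hle
  refine ⟨fun ⟨a, ha, h⟩ => ?_, fun ⟨o, _, hle, hgap⟩ => ?_⟩
  · obtain ⟨hle, hgap⟩ := (long_gap_iff a (hL a ha).1).1 h
    rcases (hmem a).1 ha with rfl | ⟨i, rfl⟩ | rfl
    · exact ⟨none, hω, hle, hgap⟩
    · exact ⟨some i, hω, hle, hgap⟩
    · linarith
  · have ho : o.elim 0 ω ∈ L := by cases o <;> simp [hmem]
    exact ⟨_, ho, (long_gap_iff _ (hL _ ho).1).2 ⟨hle, hgap⟩⟩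

theorem Real.volume_Icc_sdiff_Ioo {a b c d : ℝ} (hac : a ≤ c) (hcd : c ≤ d) (hdb : d ≤ b) :
    volume (Icc a b \ Ioo c d) = ENNReal.ofReal (b - a - (d - c)) := by
  rw [measure_sdiff (Ioo_subset_Icc_self.trans (Icc_subset_Icc hac hdb))
    measurableSet_Ioo.nullMeasurableSet measure_Ioo_lt_top.ne, Real.volume_Icc, Real.volume_Ioo,
    ← ENNReal.ofReal_sub _ (sub_nonneg.2 hcd)]

theorem MeasureTheory.Measure.prod_setOf_of_measure_fiber_eq {α β : Type*} [MeasurableSpace α]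
    [MeasurableSpace β] (μ : Measure α) (ν : Measure β) [SFinite ν] {A : Set α} {B : α → Set β}
    {c : ENNReal} (hs : MeasurableSet {p : α × β | p.1 ∈ A ∧ p.2 ∈ B p.1}) (hA : MeasurableSet A)
    (hB : ∀ a ∈ A, ν (B a) = c) :
    μ.prod ν {p : α × β | p.1 ∈ A ∧ p.2 ∈ B p.1} = μ A * c := by
  have hfiber : (fun a => ν (Prod.mk a ⁻¹' {p : α × β | p.1 ∈ A ∧ p.2 ∈ B p.1})) =
      A.indicator fun _ => c := by
    ext a
    by_cases ha : a ∈ A <;> simp [ha, hB, preimage]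
  rw [Measure.prod_apply hs, hfiber, lintegral_indicator_const hA, mul_comm]

theorem volume_setOf_apply_eq_apply {m : ℕ} {i j : Fin m} (hij : i ≠ j) :
    volume {ω : Fin m → ℝ | ω i = ω j} = 0 := by
  let s : Submodule ℝ (Fin m → ℝ) :=
    LinearMap.ker (LinearMap.proj (R := ℝ) (φ := fun _ => ℝ) i - LinearMap.proj j)
  have hs : s ≠ ⊤ := fun h => by
    have := h ▸ Submodule.mem_top (x := Pi.single i (1 : ℝ))
    simp [s, hij] at this
  convert Measure.addHaar_submodule volume s hs using 2
  ext ω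
  simp [s, sub_eq_zero]

theorem volume_setOf_apply_eq {m : ℕ} (i : Fin m) (c : ℝ) :
    volume {ω : Fin m → ℝ | ω i = c} = 0 := by
  rw [volume_pi]
  exact Measure.pi_hyperplane (fun _ : Fin m => (volume : Measure ℝ)) i c

theorem volume_pi_Icc_sdiff_Ioo (k : ℕ) {t ℓ : ℝ} (hℓ : 0 ≤ ℓ) (ht : t ∈ Icc 0 (1 - ℓ)) :
    volume (univ.pi fun _ : Fin k => Icc (0 : ℝ) 1 \ Ioo t (t + ℓ)) =
      ENNReal.ofReal (1 - ℓ) ^ k := by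
  rw [volume_pi_pi, Real.volume_Icc_sdiff_Ioo ht.1 (le_add_of_nonneg_right hℓ)
    (le_sub_iff_add_le.1 ht.2), Finset.prod_const, Finset.card_univ, Fintype.card_fin]
  ring_nf

theorem longGapEvent_none {m : ℕ} {ℓ : ℝ} (hℓ : ℓ ≤ 1) :
    longGapEvent m ℓ none = univ.pi fun _ => Icc 0 1 \ Ioo 0 ℓ := by
  ext ω
  simp [longGapEvent, hℓ, forall_and]

theorem longGapEvent_some {k : ℕ} {ℓ : ℝ} (hℓ : 0 ≤ ℓ) (i : Fin (k + 1)) :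
    longGapEvent (k + 1) ℓ (some i) = MeasurableEquiv.piFinSuccAbove (fun _ => ℝ) i ⁻¹'
      {p | p.1 ∈ Icc 0 (1 - ℓ) ∧ p.2 ∈ univ.pi fun _ => Icc 0 1 \ Ioo p.1 (p.1 + ℓ)} := by
  ext ω
  simp only [longGapEvent, mem_Icc, forall_and, Fin.forall_iff_succAbove i, Option.elim_some,
    mem_Ioo, not_and, not_lt, lt_self_iff_false, add_le_iff_nonpos_right, IsEmpty.forall_iff,
    true_and, mem_ofPred_eq, MeasurableEquiv.piFinSuccAbove_apply, le_sub_iff_add_le, mem_pi,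
    mem_univ, mem_sdiff, forall_const, preimage_ofPred_eq, Fin.insertNthEquiv_symm_apply,
    Fin.removeNth]
  grind

theorem measurableSet_longGapEvent (m : ℕ) (ℓ : ℝ) (o : Option (Fin m)) :
    MeasurableSet (longGapEvent m ℓ o) := by
  cases o <;>
  · simp only [longGapEvent, Option.elim]
    measurability

theorem volume_longGapEvent {m : ℕ} {ℓ : ℝ} (h0 : 0 ≤ ℓ) (h1 : ℓ ≤ 1) (o : Option (Fin m)) :
    volume (longGapEvent m ℓ o) = ENNReal.ofReal (1 - ℓ) ^ m := by
  rcases o with _ | i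
  · simpa [longGapEvent_none h1] using volume_pi_Icc_sdiff_Ioo m h0 (t := 0) (by simpa using h1)
  cases m with
  | zero => exact i.elim0
  | succ k =>
    have hT : MeasurableSet {p : ℝ × (Fin k → ℝ) |
        p.1 ∈ Icc 0 (1 - ℓ) ∧ p.2 ∈ univ.pi fun _ => Icc 0 1 \ Ioo p.1 (p.1 + ℓ)} := by
      measurability
    rw [longGapEvent_some h0 i,
      (volume_preserving_piFinSuccAbove (fun _ => ℝ) i).measure_preimage hT.nullMeasurableSet,
      Measure.volume_eq_prod, Measure.prod_setOf_of_measure_fiber_eq _ _ hT measurableSet_Icc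
        fun t ht => volume_pi_Icc_sdiff_Ioo k h0 ht, Real.volume_Icc, sub_zero, pow_succ']

theorem pairwise_aedisjoint_longGapEvent {m : ℕ} {ℓ : ℝ} (hℓ : 1 / 2 ≤ ℓ) :
    Pairwise fun o o' : Option (Fin m) =>
      AEDisjoint volume (longGapEvent m ℓ o) (longGapEvent m ℓ o') := by
  have none_some (i : Fin m) :
      AEDisjoint volume (longGapEvent m ℓ none) (longGapEvent m ℓ i) := by
    refine measure_mono_null (t := {ω | ω i = 0} ∪ {ω | ω i = 1 - ℓ}) ?_
      (measure_union_null (volume_setOf_apply_eq i 0) (volume_setOf_apply_eq i _))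
    rintro ω ⟨⟨hω, -, hgap⟩, -, hi, -⟩
    simp only [Option.elim, zero_add, mem_Ioo, not_and, not_lt] at hgap hi
    rcases (hω i).1.eq_or_lt with h | h
    · exact Or.inl h.symm
    · exact Or.inr (show ω i = 1 - ℓ by linarith [hgap i h])
  have some_some {i j : Fin m} (hij : i ≠ j) :
      AEDisjoint volume (longGapEvent m ℓ i) (longGapEvent m ℓ j) := by
    refine measure_mono_null (t := {ω | ω i = ω j} ∪ ({ω | ω i = 0} ∪ {ω | ω j = 0})) ?_
      (measure_union_null (volume_setOf_apply_eq_apply hij)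
        (measure_union_null (volume_setOf_apply_eq i 0) (volume_setOf_apply_eq j 0)))
    rintro ω ⟨⟨hω, hi, hgapi⟩, -, hj, hgapj⟩
    simp only [Option.elim, mem_Ioo, not_and, not_lt] at hgapi hgapj hi hj
    rcases lt_trichotomy (ω i) (ω j) with h | h | h
    · exact Or.inr (Or.inl (show ω i = 0 by linarith [hgapi j h, (hω i).1]))
    · exact Or.inl h
    · exact Or.inr (Or.inr (show ω j = 0 by linarith [hgapj i h, (hω j).1]))
  rintro (_ | i) (_ | j) hne
  · exact absurd rfl hne
  · exact none_some j
  · exact (none_some i).symm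
  · exact some_some fun h => hne (congrArg some h)

theorem volume_iUnion_longGapEvent {m : ℕ} {ℓ : ℝ} (h0 : 1 / 2 ≤ ℓ) (h1 : ℓ ≤ 1) :
    volume (⋃ o, longGapEvent m ℓ o) = (m + 1) * ENNReal.ofReal (1 - ℓ) ^ m := by
  rw [measure_iUnion₀ (pairwise_aedisjoint_longGapEvent h0)
    fun o => (measurableSet_longGapEvent m ℓ o).nullMeasurableSet, tsum_fintype]
  simp [volume_longGapEvent (by linarith) h1]

theorem volume_setOf_spacings_lt (m : ℕ) {ℓ : ℝ} (h0 : 1 / 2 ≤ ℓ) (h1 : ℓ ≤ 1) :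
    volume {ω : Fin m → ℝ | (∀ i, ω i ∈ Icc 0 1) ∧ ∀ g ∈ spacings m ω, g < ℓ} =
      ENNReal.ofReal (1 - (m + 1) * (1 - ℓ) ^ m) := by
  have hset : {ω : Fin m → ℝ | (∀ i, ω i ∈ Icc 0 1) ∧ ∀ g ∈ spacings m ω, g < ℓ} =
      univ.pi (fun _ => Icc 0 1) \ ⋃ o, longGapEvent m ℓ o := by
    ext ω
    simp only [mem_ofPred_eq, mem_sdiff, mem_univ_pi, mem_iUnion, not_exists]
    exact and_congr_right fun hω => forall_spacings_lt_iff hω (by linarith)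
  have hsub : ⋃ o, longGapEvent m ℓ o ⊆ univ.pi fun _ => Icc 0 1 :=
    iUnion_subset fun o ω hω => mem_univ_pi.2 hω.1
  rw [hset, measure_sdiff hsub
    (MeasurableSet.iUnion (measurableSet_longGapEvent m ℓ)).nullMeasurableSet
    (by rw [volume_iUnion_longGapEvent h0 h1]; finiteness), volume_iUnion_longGapEvent h0 h1,
    volume_pi_pi, ENNReal.ofReal_sub 1 (mul_nonneg (by positivity) (pow_nonneg (by linarith) m)),
    ENNReal.ofReal_mul (by positivity), ENNReal.ofReal_pow (by linarith),
    ENNReal.ofReal_add (by positivity) zero_le_one]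
  simp

/-- If `[0,1]` is broken at `n−1` i.i.d. uniform points into `n` pieces, the
probability that the `n` pieces form an `n`-gon (every piece `< 1/2`) is
`1 − n/2^{n−1}`. -/
theorem prob_all_spacings_lt_half (n : ℕ) (hn : 1 ≤ n) :
    volume {ω : Fin (n - 1) → ℝ | (∀ i, ω i ∈ Icc (0:ℝ) 1) ∧
        ∀ g ∈ spacings (n - 1) ω, g < 1 / 2}
      = ENNReal.ofReal (1 - n / 2 ^ (n - 1)) := by
  obtain ⟨m, rfl⟩ := Nat.exists_eq_add_of_le' hn
  rw [Nat.add_sub_cancel, volume_setOf_spacings_lt m le_rfl (by norm_num)]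
  congr 1
  push_cast
  rw [show (1 : ℝ) - 1 / 2 = 2⁻¹ by norm_num, inv_pow, div_eq_mul_inv]
end
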